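/- arXiv:1306.3454 — 9 statements merged into one kernel-verified Lean document; each statement's English description precedes it below -/
import Mathlib

section
/- Let γ ∈ (0,1), β > 0 and ε ∈ (0,1). For k ≥ 1 define μ^ε_{≥k} := (1/(1−ε)) · B(k, β/γ)^{−1} · ∫_ε^1 ∫_{y^γ}^1 x^{β/γ − 1} (1−x)^{k−1} dx dy. Then lim_{k→∞} (log μ^ε_{≥k}) / k = log(1 − ε^γ). -/
/-- The beta function `B(s,t) = ∫_0^1 x^{s-1} (1-x)^{t-1} dx`. -/
noncomputable def betaFn (s t : ℝ) : ℝ :=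
  ∫ x in (0 : ℝ)..1, x ^ (s - 1) * (1 - x) ^ (t - 1)

/-- The tail `μ^ε_{≥ k}` of the asymptotic indegree distribution of the damaged
preferential attachment network. -/
noncomputable def muTail (γ β ε : ℝ) (k : ℕ) : ℝ :=
  (1 / (1 - ε)) * (betaFn k (β / γ))⁻¹ *
    ∫ y in ε..1, ∫ x in (y ^ γ)..1, x ^ (β / γ - 1) * (1 - x) ^ (k - 1)

/-!
Write `c = β / γ` and `a = ε ^ γ`. Since `1 / (c k^(c+1)) ≤ B(k, c) ≤ 1 / c`, the normalising
factor is polynomial in `k` and only the double integral matters on the exponential scale.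
For `x ∈ [a, 1]` the factor `x^(c-1)` is pinched between two positive constants, so the inner
integral from `y^γ` is comparable to `(1 - y^γ)^k / k ≤ (1 - a)^k / k`. For the lower bound,
the chord estimate `y^γ ≤ ε^(γ-1) y` for `y ≥ ε` gives `(1 - y^γ)^k ≥ (1 - ε^(γ-1) y)^k`,
whose integral over `[ε, ε^(1-γ)]` is `(1 - a)^(k+1) / (ε^(γ-1) (k+1))`. Hence `μ^ε_{≥k}` is
`(1 - a)^k` up to polynomial factors.
-/

open MeasureTheory Real Filter Set Topology intervalIntegral

lemma tendsto_log_mul_rpow_mul_pow_div {C r : ℝ} (hC : 0 < C) (hr : 0 < r) (p : ℝ) :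
    Tendsto (fun k : ℕ => log (C * (k : ℝ) ^ p * r ^ k) / k) atTop (𝓝 (log r)) := by
  have hlog : Tendsto (fun k : ℕ => log k / (k : ℝ)) atTop (𝓝 0) :=
    isLittleO_log_id_atTop.tendsto_div_nhds_zero.comp tendsto_natCast_atTop_atTop
  have hlim := ((tendsto_const_div_atTop_nhds_zero_nat (log C)).add
    (hlog.const_mul p)).add_const (log r)
  rw [mul_zero, add_zero, zero_add] at hlim
  refine hlim.congr' ?_
  filter_upwards [eventually_ge_atTop 1] with k hk
  have hk : (0 : ℝ) < k := by exact_mod_cast hk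
  rw [log_mul (by positivity) (by positivity), log_mul hC.ne' (by positivity), log_rpow hk,
    log_pow]
  field_simp

lemma tendsto_log_div_of_le_of_le {u : ℕ → ℝ} {r C₁ C₂ p q : ℝ} (hr : 0 < r) (hC₁ : 0 < C₁)
    (hC₂ : 0 < C₂) (hlow : ∀ᶠ k : ℕ in atTop, C₁ * (k : ℝ) ^ p * r ^ k ≤ u k)
    (hup : ∀ᶠ k : ℕ in atTop, u k ≤ C₂ * (k : ℝ) ^ q * r ^ k) :
    Tendsto (fun k : ℕ => log (u k) / k) atTop (𝓝 (log r)) := by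
  have hpos : ∀ᶠ k : ℕ in atTop, 0 < C₁ * (k : ℝ) ^ p * r ^ k := by
    filter_upwards [eventually_ge_atTop 1] with k hk
    have hk : (0 : ℝ) < k := by exact_mod_cast hk
    positivity
  refine tendsto_of_tendsto_of_tendsto_of_le_of_le' (tendsto_log_mul_rpow_mul_pow_div hC₁ hr p)
    (tendsto_log_mul_rpow_mul_pow_div hC₂ hr q) ?_ ?_
  · filter_upwards [hlow, hpos] with k hlo hpos
    gcongr
  · filter_upwards [hlow, hup, hpos] with k hlo hhi hpos
    have := hpos.trans_le hlo
    gcongr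

lemma inv_le_one_sub_inv_pow {k : ℕ} (hk : 1 ≤ k) : (k : ℝ)⁻¹ ≤ (1 - (k : ℝ)⁻¹) ^ (k - 1) := by
  have hk' : (1 : ℝ) ≤ k := by exact_mod_cast hk
  have h := one_add_mul_le_pow (a := -(k : ℝ)⁻¹) (by linarith [inv_le_one_of_one_le₀ hk']) (k - 1)
  rw [Nat.cast_pred hk, ← sub_eq_add_neg] at h
  calc (k : ℝ)⁻¹ = 1 + ((k : ℝ) - 1) * -(k : ℝ)⁻¹ := by field_simp; ring
    _ ≤ _ := h

lemma rpow_mem_uIcc_one {a x : ℝ} (ha : 0 < a) (hx : x ∈ Icc a 1) (r : ℝ) :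
    x ^ r ∈ uIcc (a ^ r) 1 := by
  have hx0 : 0 < x := ha.trans_le hx.1
  rw [← one_rpow r]
  rcases le_total 0 r with hr | hr
  · exact Icc_subset_uIcc ⟨rpow_le_rpow ha.le hx.1 hr, rpow_le_rpow hx0.le hx.2 hr⟩
  · exact Icc_subset_uIcc' ⟨rpow_le_rpow_of_nonpos hx0 hx.2 hr, rpow_le_rpow_of_nonpos ha hx.1 hr⟩

lemma rpow_le_rpow_sub_one_mul {ε y γ : ℝ} (hε : 0 < ε) (hy : ε ≤ y) (hγ : γ ≤ 1) :
    y ^ γ ≤ ε ^ (γ - 1) * y := by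
  have hy0 : 0 < y := hε.trans_le hy
  calc y ^ γ = y ^ (γ - 1) * y := by rw [rpow_sub_one hy0.ne', div_mul_cancel₀ _ hy0.ne']
    _ ≤ ε ^ (γ - 1) * y :=
      mul_le_mul_of_nonneg_right (rpow_le_rpow_of_nonpos hε hy (by linarith)) hy0.le

lemma intervalIntegrable_one_sub_rpow {r : ℝ} (hr : -1 < r) (a b : ℝ) :
    IntervalIntegrable (fun x : ℝ => (1 - x) ^ r) volume a b := by
  simpa using (intervalIntegrable_rpow' hr (a := 1 - a) (b := 1 - b)).comp_sub_left 1

lemma integral_one_sub_rpow {c : ℝ} (hc : 0 < c) (b : ℝ) :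
    ∫ x in b..1, (1 - x) ^ (c - 1) = (1 - b) ^ c / c := by
  rw [integral_comp_sub_left (fun u => u ^ (c - 1)), sub_self,
    integral_rpow (Or.inl (by linarith)), sub_add_cancel, zero_rpow hc.ne']
  ring

lemma integral_one_sub_pow (n : ℕ) (b : ℝ) :
    ∫ x in b..1, (1 - x) ^ n = (1 - b) ^ (n + 1) / (n + 1) := by
  simp [integral_comp_sub_left (fun u => u ^ n)]

lemma integral_one_sub_mul_pow {D : ℝ} (hD : D ≠ 0) (a : ℝ) (n : ℕ) :
    ∫ y in a..D⁻¹, (1 - D * y) ^ n = (1 - D * a) ^ (n + 1) / (D * (n + 1)) := by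
  rw [integral_comp_sub_mul (fun u => u ^ n) hD, mul_inv_cancel₀ hD, sub_self, integral_pow,
    smul_eq_mul]
  simp
  field_simp

section Beta

variable {s c : ℝ}

lemma intervalIntegrable_betaFn_integrand (hs : 1 ≤ s) (hc : 0 < c) :
    IntervalIntegrable (fun x : ℝ => x ^ (s - 1) * (1 - x) ^ (c - 1)) volume 0 1 :=
  (intervalIntegrable_one_sub_rpow (by linarith) 0 1).continuousOn_mul
    (continuousOn_id.rpow_const fun _ _ => Or.inr (by linarith))

lemma betaFn_le_inv (hs : 1 ≤ s) (hc : 0 < c) : betaFn s c ≤ c⁻¹ := by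
  calc betaFn s c ≤ ∫ x in (0 : ℝ)..1, (1 - x) ^ (c - 1) :=
        integral_mono_on zero_le_one (intervalIntegrable_betaFn_integrand hs hc)
          (intervalIntegrable_one_sub_rpow (by linarith) 0 1) fun x hx =>
            mul_le_of_le_one_left (rpow_nonneg (sub_nonneg.2 hx.2) _)
              (rpow_le_one hx.1 hx.2 (by linarith))
    _ = c⁻¹ := by rw [integral_one_sub_rpow hc, sub_zero, one_rpow, one_div]

lemma inv_mul_rpow_le_betaFn (hc : 0 < c) {k : ℕ} (hk : 1 ≤ k) :
    (c * (k : ℝ) ^ (c + 1))⁻¹ ≤ betaFn k c := by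
  have hk' : (1 : ℝ) ≤ k := by exact_mod_cast hk
  set b : ℝ := 1 - (k : ℝ)⁻¹
  have hb0 : 0 ≤ b := sub_nonneg.2 (inv_le_one_of_one_le₀ hk')
  have hb1 : b ≤ 1 := sub_le_self _ (by positivity)
  have hpow : ∀ x ∈ Icc b 1, (k : ℝ)⁻¹ ≤ x ^ ((k : ℝ) - 1) := fun x hx =>
    calc (k : ℝ)⁻¹ ≤ b ^ (k - 1) := inv_le_one_sub_inv_pow hk
      _ = b ^ ((k : ℝ) - 1) := by rw [← Nat.cast_pred hk, rpow_natCast]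
      _ ≤ x ^ ((k : ℝ) - 1) := rpow_le_rpow hb0 hx.1 (by linarith)
  calc (c * (k : ℝ) ^ (c + 1))⁻¹ = ∫ x in b..1, (k : ℝ)⁻¹ * (1 - x) ^ (c - 1) := by
        rw [intervalIntegral.integral_const_mul, integral_one_sub_rpow hc, sub_sub_cancel,
          inv_rpow (by positivity), rpow_add_one (by positivity)]
        field_simp
    _ ≤ ∫ x in b..1, x ^ ((k : ℝ) - 1) * (1 - x) ^ (c - 1) :=
        integral_mono_on hb1 ((intervalIntegrable_one_sub_rpow (by linarith) _ _).const_mul _)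
          ((intervalIntegrable_betaFn_integrand hk' hc).mono_set
            (uIcc_subset_uIcc (by simp [hb0, hb1]) (by simp))) fun x hx =>
          mul_le_mul_of_nonneg_right (hpow x hx) (rpow_nonneg (sub_nonneg.2 hx.2) _)
    _ ≤ betaFn k c :=
        integral_mono_interval hb0 hb1 le_rfl
          (ae_restrict_of_forall_mem measurableSet_Ioc fun x hx =>
            mul_nonneg (rpow_nonneg hx.1.le _) (rpow_nonneg (sub_nonneg.2 hx.2) _))
          (intervalIntegrable_betaFn_integrand hk' hc)

end Beta

noncomputable def betaTail (c : ℝ) (n : ℕ) (b : ℝ) : ℝ :=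
  ∫ x in b..1, x ^ (c - 1) * (1 - x) ^ n

lemma muTail_succ (γ β ε : ℝ) (n : ℕ) :
    muTail γ β ε (n + 1) = 1 / (1 - ε) * (betaFn ((n + 1 : ℕ) : ℝ) (β / γ))⁻¹ *
      ∫ y in ε..1, betaTail (β / γ) n (y ^ γ) :=
  rfl

section BetaTail

variable {c : ℝ} {n : ℕ}

lemma continuousOn_rpow_mul_one_sub_pow {a b : ℝ} (ha : 0 < a) (hb : 0 < b) (r : ℝ) :
    ContinuousOn (fun x : ℝ => x ^ r * (1 - x) ^ n) (uIcc a b) := fun x hx =>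
  ((continuousAt_rpow_const x r (Or.inl ((lt_min ha hb).trans_le hx.1).ne')).mul
    (by fun_prop)).continuousWithinAt

lemma betaTail_nonneg {b : ℝ} (hb : 0 ≤ b) (hb1 : b ≤ 1) : 0 ≤ betaTail c n b :=
  integral_nonneg hb1 fun _ hx =>
    mul_nonneg (rpow_nonneg (hb.trans hx.1) _) (pow_nonneg (sub_nonneg.2 hx.2) _)

lemma betaTail_le {b M : ℝ} (hb : 0 < b) (hb1 : b ≤ 1) (hM : ∀ x ∈ Icc b 1, x ^ (c - 1) ≤ M) :
    betaTail c n b ≤ M * ((1 - b) ^ (n + 1) / (n + 1)) := by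
  rw [← integral_one_sub_pow, ← intervalIntegral.integral_const_mul]
  exact integral_mono_on hb1 ((continuousOn_rpow_mul_one_sub_pow hb one_pos _).intervalIntegrable)
    (Continuous.intervalIntegrable (by fun_prop) _ _) fun x hx =>
      mul_le_mul_of_nonneg_right (hM x hx) (pow_nonneg (sub_nonneg.2 hx.2) _)

lemma le_betaTail {b m : ℝ} (hb : 0 < b) (hb1 : b ≤ 1) (hm : ∀ x ∈ Icc b 1, m ≤ x ^ (c - 1)) :
    m * ((1 - b) ^ (n + 1) / (n + 1)) ≤ betaTail c n b := by
  rw [← integral_one_sub_pow, ← intervalIntegral.integral_const_mul]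
  exact integral_mono_on hb1 (Continuous.intervalIntegrable (by fun_prop) _ _)
    ((continuousOn_rpow_mul_one_sub_pow hb one_pos _).intervalIntegrable)
    fun x hx => mul_le_mul_of_nonneg_right (hm x hx) (pow_nonneg (sub_nonneg.2 hx.2) _)

lemma continuousOn_betaTail {a : ℝ} (ha : 0 < a) : ContinuousOn (betaTail c n) (uIcc a 1) :=
  continuousOn_primitive_interval_left
    ((continuousOn_rpow_mul_one_sub_pow ha one_pos _).integrableOn_uIcc)

variable {ε γ : ℝ}

lemma intervalIntegrable_betaTail_rpow (hε : 0 < ε) (hγ : 0 ≤ γ) :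
    IntervalIntegrable (fun y => betaTail c n (y ^ γ)) volume ε 1 := by
  have hmono : MonotoneOn (fun y : ℝ => y ^ γ) (uIcc ε 1) :=
    (monotoneOn_rpow_Ici_of_exponent_nonneg hγ).mono fun y hy => (lt_min hε one_pos).le.trans hy.1
  refine ((continuousOn_betaTail (rpow_pos_of_pos hε γ)).comp
    (continuousOn_id.rpow_const fun _ _ => Or.inr hγ) ?_).intervalIntegrable
  simpa using hmono.mapsTo_uIcc

lemma integral_betaTail_rpow_le (hε : 0 < ε) (hε1 : ε ≤ 1) (hγ : 0 ≤ γ) :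
    ∫ y in ε..1, betaTail c n (y ^ γ) ≤
      (1 - ε) * (max ((ε ^ γ) ^ (c - 1)) 1 * ((1 - ε ^ γ) ^ (n + 1) / (n + 1))) := by
  have ha : 0 < ε ^ γ := rpow_pos_of_pos hε γ
  calc ∫ y in ε..1, betaTail c n (y ^ γ)
      ≤ ∫ _ in ε..1, max ((ε ^ γ) ^ (c - 1)) 1 * ((1 - ε ^ γ) ^ (n + 1) / (n + 1)) :=
        integral_mono_on hε1 (intervalIntegrable_betaTail_rpow hε hγ) intervalIntegrable_const
          fun y hy => ?_
    _ = _ := by rw [intervalIntegral.integral_const, smul_eq_mul]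
  have hay : ε ^ γ ≤ y ^ γ := rpow_le_rpow hε.le hy.1 hγ
  have hy1 : y ^ γ ≤ 1 := rpow_le_one (hε.le.trans hy.1) hy.2 hγ
  calc betaTail c n (y ^ γ) ≤ max ((ε ^ γ) ^ (c - 1)) 1 * ((1 - y ^ γ) ^ (n + 1) / (n + 1)) :=
        betaTail_le (ha.trans_le hay) hy1 fun x hx =>
          (rpow_mem_uIcc_one ha ⟨hay.trans hx.1, hx.2⟩ _).2
    _ ≤ _ := by gcongr

lemma le_integral_betaTail_rpow (hε : 0 < ε) (hε1 : ε ≤ 1) (hγ : γ ∈ Icc 0 1) :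
    min ((ε ^ γ) ^ (c - 1)) 1 * (1 - ε ^ γ) ^ (n + 2) / (ε ^ (γ - 1) * (n + 1) * (n + 2)) ≤
      ∫ y in ε..1, betaTail c n (y ^ γ) := by
  set a := ε ^ γ
  set D := ε ^ (γ - 1)
  set m := min (a ^ (c - 1)) 1
  have ha : 0 < a := rpow_pos_of_pos hε γ
  have hD : 0 < D := rpow_pos_of_pos hε _
  have hm : 0 ≤ m := le_min (rpow_nonneg ha.le _) zero_le_one
  have hDε : D * ε = a := by rw [← rpow_add_one hε.ne']; simp [a]
  have hεD : ε ≤ D⁻¹ := by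
    rw [← mul_one D⁻¹, le_inv_mul_iff₀ hD, hDε]
    exact rpow_le_one hε.le hε1 hγ.1
  have hD1 : D⁻¹ ≤ 1 :=
    inv_le_one_of_one_le₀ (one_le_rpow_of_pos_of_le_one_of_nonpos hε hε1 (by linarith [hγ.2]))
  have key : ∀ y ∈ Icc ε D⁻¹, m * ((1 - D * y) ^ (n + 1) / (n + 1)) ≤ betaTail c n (y ^ γ) := by
    intro y hy
    have hay : a ≤ y ^ γ := rpow_le_rpow hε.le hy.1 hγ.1
    have hy1 : y ^ γ ≤ 1 := rpow_le_one (hε.le.trans hy.1) (hy.2.trans hD1) hγ.1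
    have hDy : 0 ≤ 1 - D * y := by
      rw [sub_nonneg, ← mul_inv_cancel₀ hD.ne']
      exact mul_le_mul_of_nonneg_left hy.2 hD.le
    calc m * ((1 - D * y) ^ (n + 1) / (n + 1)) ≤ m * ((1 - y ^ γ) ^ (n + 1) / (n + 1)) := by
          gcongr
          exact rpow_le_rpow_sub_one_mul hε hy.1 hγ.2
      _ ≤ betaTail c n (y ^ γ) :=
          le_betaTail (ha.trans_le hay) hy1 fun x hx =>
            (rpow_mem_uIcc_one ha ⟨hay.trans hx.1, hx.2⟩ _).1
  calc m * (1 - a) ^ (n + 2) / (D * (n + 1) * (n + 2))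
      = ∫ y in ε..D⁻¹, m * ((1 - D * y) ^ (n + 1) / (n + 1)) := by
        rw [intervalIntegral.integral_const_mul, intervalIntegral.integral_div, integral_one_sub_mul_pow hD.ne', hDε]
        push_cast
        field_simp
        ring
    _ ≤ ∫ y in ε..D⁻¹, betaTail c n (y ^ γ) :=
        integral_mono_on hεD (Continuous.intervalIntegrable (by fun_prop) _ _)
          ((intervalIntegrable_betaTail_rpow hε hγ.1).mono_set
            (uIcc_subset_uIcc left_mem_uIcc (by rw [uIcc_of_le hε1]; exact ⟨hεD, hD1⟩))) key
    _ ≤ ∫ y in ε..1, betaTail c n (y ^ γ) :=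
        integral_mono_interval le_rfl hεD hD1
          (ae_restrict_of_forall_mem measurableSet_Ioc fun y hy =>
            betaTail_nonneg (rpow_nonneg (hε.trans hy.1).le _)
              (rpow_le_one (hε.trans hy.1).le hy.2 hγ.1))
          (intervalIntegrable_betaTail_rpow hε hγ.1)

end BetaTail

lemma exists_muTail_le {γ β ε : ℝ} (hγ : 0 < γ) (hβ : 0 < β) (hε : ε ∈ Ioo 0 1) :
    ∃ C > 0, ∀ k : ℕ, 1 ≤ k → muTail γ β ε k ≤ C * (k : ℝ) ^ (β / γ) * (1 - ε ^ γ) ^ k := by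
  set c := β / γ
  have hc : 0 < c := div_pos hβ hγ
  set M := max ((ε ^ γ) ^ (c - 1)) 1
  refine ⟨c * M, by positivity, fun k hk => ?_⟩
  obtain ⟨n, rfl⟩ : ∃ n, k = n + 1 := ⟨k - 1, by omega⟩
  have hε1 : 0 < 1 - ε := sub_pos.2 hε.2
  have hB := inv_le_of_inv_le₀ (by positivity) (inv_mul_rpow_le_betaFn hc hk)
  have hI : 0 ≤ ∫ y in ε..1, betaTail c n (y ^ γ) :=
    integral_nonneg hε.2.le fun y hy => betaTail_nonneg (rpow_nonneg (hε.1.trans_le hy.1).le _)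
      (rpow_le_one (hε.1.trans_le hy.1).le hy.2 hγ.le)
  rw [muTail_succ]
  calc 1 / (1 - ε) * (betaFn ((n + 1 : ℕ) : ℝ) c)⁻¹ * ∫ y in ε..1, betaTail c n (y ^ γ)
      ≤ 1 / (1 - ε) * (c * ((n + 1 : ℕ) : ℝ) ^ (c + 1)) *
          ((1 - ε) * (M * ((1 - ε ^ γ) ^ (n + 1) / (n + 1)))) := by
        gcongr
        exact integral_betaTail_rpow_le hε.1 hε.2.le hγ.le
    _ = c * M * ((n + 1 : ℕ) : ℝ) ^ c * (1 - ε ^ γ) ^ (n + 1) := by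
        push_cast
        rw [rpow_add_one (by positivity)]
        field_simp

lemma exists_le_muTail {γ β ε : ℝ} (hγ : γ ∈ Ioc 0 1) (hβ : 0 < β) (hε : ε ∈ Ioo 0 1) :
    ∃ C > 0, ∀ k : ℕ, 1 ≤ k → C * (k : ℝ) ^ (-2 : ℝ) * (1 - ε ^ γ) ^ k ≤ muTail γ β ε k := by
  set c := β / γ
  have hc : 0 < c := div_pos hβ hγ.1
  set a := ε ^ γ
  set D := ε ^ (γ - 1)
  set m := min (a ^ (c - 1)) 1
  have ha : 0 < 1 - a := sub_pos.2 (rpow_lt_one hε.1.le hε.2 hγ.1)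
  have hε1 : 0 < 1 - ε := sub_pos.2 hε.2
  have hD : 0 < D := rpow_pos_of_pos hε.1 _
  have hm : 0 < m := lt_min (rpow_pos_of_pos (rpow_pos_of_pos hε.1 γ) _) one_pos
  refine ⟨c * m * (1 - a) / (2 * D * (1 - ε)), by positivity, fun k hk => ?_⟩
  obtain ⟨n, rfl⟩ : ∃ n, k = n + 1 := ⟨k - 1, by omega⟩
  have hBpos : 0 < betaFn ((n + 1 : ℕ) : ℝ) c :=
    lt_of_lt_of_le (by positivity) (inv_mul_rpow_le_betaFn hc hk)
  have hB : c ≤ (betaFn ((n + 1 : ℕ) : ℝ) c)⁻¹ :=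
    (le_inv_comm₀ hc hBpos).2 (betaFn_le_inv (by simp) hc)
  rw [muTail_succ]
  calc c * m * (1 - a) / (2 * D * (1 - ε)) * ((n + 1 : ℕ) : ℝ) ^ (-2 : ℝ) * (1 - a) ^ (n + 1)
      = c * m * (1 - a) ^ (n + 2) / ((1 - ε) * D) / (2 * (n + 1) ^ 2) := by
        rw [rpow_neg (by positivity), rpow_two]
        push_cast
        field_simp
        ring
    _ ≤ c * m * (1 - a) ^ (n + 2) / ((1 - ε) * D) / ((n + 1) * (n + 2)) := by
        refine div_le_div_of_nonneg_left (by positivity) (by positivity) ?_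
        nlinarith
    _ = 1 / (1 - ε) * c * (m * (1 - a) ^ (n + 2) / (D * (n + 1) * (n + 2))) := by
        field_simp
    _ ≤ 1 / (1 - ε) * (betaFn ((n + 1 : ℕ) : ℝ) c)⁻¹ * ∫ y in ε..1, betaTail c n (y ^ γ) := by
        gcongr
        exact le_integral_betaTail_rpow hε.1 hε.2.le ⟨hγ.1.le, hγ.2⟩

/-- For `γ ∈ (0,1)`, `β > 0`, `ε ∈ (0,1)`, the tails of the asymptotic
indegree distribution of the damaged network satisfy
`lim_{k→∞} (log μ^ε_{≥k})/k = log(1 − ε^γ)`. -/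
theorem log_muTail_div_tendsto (γ β ε : ℝ) (hγ : γ ∈ Set.Ioo (0 : ℝ) 1) (hβ : 0 < β)
    (hε : ε ∈ Set.Ioo (0 : ℝ) 1) :
    Filter.Tendsto (fun k : ℕ => Real.log (muTail γ β ε k) / k)
      Filter.atTop (nhds (Real.log (1 - ε ^ γ))) := by
  obtain ⟨C₁, hC₁, hlow⟩ := exists_le_muTail (Ioo_subset_Ioc_self hγ) hβ hε
  obtain ⟨C₂, hC₂, hup⟩ := exists_muTail_le hγ.1 hβ hε
  have hr : 0 < 1 - ε ^ γ := sub_pos.2 (rpow_lt_one hε.1.le hε.2 hγ.1)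
  exact tendsto_log_div_of_le_of_le hr hC₁ hC₂ (eventually_atTop.2 ⟨1, hlow⟩)
    (eventually_atTop.2 ⟨1, hup⟩)
end

section
/- Let γ ∈ (0,1), β > 0 and k ≥ 1 a natural number. Then ∫_0^1 ∫_{y^γ}^1 x^{β/γ − 1} (1−x)^{k−1} dx dy = B(k, β/γ) · B(k + β/γ, 1/γ) / B(β/γ, 1/γ). (Equivalently, the limiting degree distribution μ^ε of the damaged network specializes at ε = 0 to the power-law degree distribution μ of the undamaged network.) -/
open MeasureTheory Set Real

lemma betaFn_comm (s t : ℝ) : betaFn s t = betaFn t s := by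
  have h := intervalIntegral.integral_comp_sub_left
    (fun x : ℝ => x ^ (t - 1) * (1 - x) ^ (s - 1)) (a := 0) (b := 1) 1
  simp only [sub_sub_cancel, sub_self, sub_zero] at h
  rw [betaFn, betaFn, ← h]
  simp only [mul_comm]

lemma betaFn_eq_Gamma {s t : ℝ} (hs : 0 < s) (ht : 0 < t) :
    betaFn s t = Gamma s * Gamma t / Gamma (s + t) := by
  have hcast : (betaFn s t : ℂ) = Complex.betaIntegral s t := by
    rw [Complex.betaIntegral, betaFn, ← intervalIntegral.integral_ofReal]
    refine intervalIntegral.integral_congr fun x hx => ?_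
    rw [uIcc_of_le zero_le_one] at hx
    simp only [Complex.ofReal_mul, Complex.ofReal_cpow hx.1,
      Complex.ofReal_cpow (sub_nonneg.2 hx.2), Complex.ofReal_sub, Complex.ofReal_one]
  have h := Complex.Gamma_mul_Gamma_eq_betaIntegral (s := s) (t := t) (by simpa) (by simpa)
  rw [← hcast, ← Complex.ofReal_add, Complex.Gamma_ofReal, Complex.Gamma_ofReal,
    Complex.Gamma_ofReal, ← Complex.ofReal_mul, ← Complex.ofReal_mul, Complex.ofReal_inj] at h
  rw [h, mul_div_cancel_left₀ _ (Gamma_pos_of_pos (add_pos hs ht)).ne']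

lemma betaFn_pos {s t : ℝ} (hs : 0 < s) (ht : 0 < t) : 0 < betaFn s t := by
  rw [betaFn_eq_Gamma hs ht]
  have := Gamma_pos_of_pos hs
  have := Gamma_pos_of_pos ht
  have := Gamma_pos_of_pos (add_pos hs ht)
  positivity

lemma betaFn_mul_betaFn_add {s t u : ℝ} (hs : 0 < s) (ht : 0 < t) (hu : 0 < u) :
    betaFn s t * betaFn (s + t) u = betaFn t u * betaFn s (t + u) := by
  rw [betaFn_eq_Gamma hs ht, betaFn_eq_Gamma (add_pos hs ht) hu, betaFn_eq_Gamma ht hu,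
    betaFn_eq_Gamma hs (add_pos ht hu), add_assoc]
  have := (Gamma_pos_of_pos (add_pos hs ht)).ne'
  have := (Gamma_pos_of_pos (add_pos ht hu)).ne'
  field_simp

lemma Ioi_rpow_inter_Ioc {γ y : ℝ} (hy : 0 < y) :
    Ioi (y ^ γ) ∩ Ioc 0 1 = Ioc (y ^ γ) 1 := by
  have := rpow_pos_of_pos hy γ
  ext x
  simp only [mem_inter_iff, mem_Ioi, mem_Ioc]
  exact ⟨fun h => ⟨h.1, h.2.2⟩, fun h => ⟨h.1, this.trans h.1, h.2⟩⟩

lemma setOf_rpow_lt_inter_Ioc {γ x : ℝ} (hγ : 0 < γ) (hx : x ∈ Ioc (0 : ℝ) 1) :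
    {y | y ^ γ < x} ∩ Ioc 0 1 = Ioo 0 (x ^ (1 / γ)) := by
  have hx1 : x ^ γ⁻¹ ≤ 1 := rpow_le_one hx.1.le hx.2 (by positivity)
  ext y
  simp only [mem_inter_iff, mem_ofPred_eq, mem_Ioc, mem_Ioo, one_div]
  constructor
  · rintro ⟨h, hy0, -⟩
    exact ⟨hy0, (lt_rpow_inv_iff_of_pos hy0.le hx.1.le hγ).2 h⟩
  · rintro ⟨hy0, h⟩
    exact ⟨(lt_rpow_inv_iff_of_pos hy0.le hx.1.le hγ).1 h, hy0, h.le.trans hx1⟩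

theorem integral_integral_rpow_swap {γ : ℝ} (hγ : 0 < γ) {f : ℝ → ℝ}
    (hf : IntervalIntegrable f volume 0 1) :
    ∫ y in (0 : ℝ)..1, ∫ x in (y ^ γ)..1, f x = ∫ x in (0 : ℝ)..1, x ^ (1 / γ) * f x := by
  set μ := volume.restrict (Ioc (0 : ℝ) 1)
  set S := {q : ℝ × ℝ | q.1 ^ γ < q.2}
  have hS : MeasurableSet S := measurableSet_lt (by fun_prop) measurable_snd
  have hint : Integrable (S.indicator fun q => f q.2) (μ.prod μ) :=
    (hf.1.comp_snd μ).indicator hS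
  have inner_x : ∀ y ∈ Ioc (0 : ℝ) 1,
      ∫ x in (y ^ γ)..1, f x = ∫ x, S.indicator (fun q => f q.2) (y, x) ∂μ := by
    intro y hy
    have hslice : (fun x => S.indicator (fun q => f q.2) (y, x)) = (Ioi (y ^ γ)).indicator f := by
      ext x; simp [S, indicator_apply]
    rw [hslice, integral_indicator measurableSet_Ioi, Measure.restrict_restrict measurableSet_Ioi,
      Ioi_rpow_inter_Ioc hy.1,
      intervalIntegral.integral_of_le (rpow_le_one hy.1.le hy.2 hγ.le)]
  have inner_y : ∀ x ∈ Ioc (0 : ℝ) 1,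
      ∫ y, S.indicator (fun q => f q.2) (y, x) ∂μ = x ^ (1 / γ) * f x := by
    intro x hx
    have hSx : MeasurableSet {y : ℝ | y ^ γ < x} := measurableSet_lt (by fun_prop) measurable_const
    have hslice : (fun y => S.indicator (fun q => f q.2) (y, x))
        = {y : ℝ | y ^ γ < x}.indicator fun _ => f x := by
      ext y; simp [S, indicator_apply]
    rw [hslice, integral_indicator hSx, setIntegral_const, Measure.real,
      Measure.restrict_apply hSx, setOf_rpow_lt_inter_Ioc hγ hx, volume_Ioo, sub_zero,
      ENNReal.toReal_ofReal (rpow_nonneg hx.1.le _), smul_eq_mul]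
  calc ∫ y in (0 : ℝ)..1, ∫ x in (y ^ γ)..1, f x
      = ∫ y, ∫ x, S.indicator (fun q => f q.2) (y, x) ∂μ ∂μ := by
        rw [intervalIntegral.integral_of_le zero_le_one]
        exact setIntegral_congr_fun measurableSet_Ioc inner_x
    _ = ∫ x, ∫ y, S.indicator (fun q => f q.2) (y, x) ∂μ ∂μ := integral_integral_swap hint
    _ = ∫ x in (0 : ℝ)..1, x ^ (1 / γ) * f x := by
        rw [intervalIntegral.integral_of_le zero_le_one]
        exact setIntegral_congr_fun measurableSet_Ioc inner_y

lemma integral_rpow_mul_betaIntegrand (c s : ℝ) {k : ℕ} (hk : 1 ≤ k) :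
    ∫ x in (0 : ℝ)..1, x ^ c * (x ^ (s - 1) * (1 - x) ^ (k - 1)) = betaFn (s + c) k := by
  rw [betaFn, intervalIntegral.integral_of_le zero_le_one,
    intervalIntegral.integral_of_le zero_le_one]
  refine setIntegral_congr_fun measurableSet_Ioc fun x hx => ?_
  rw [← mul_assoc, ← rpow_add hx.1, ← Nat.cast_one, ← Nat.cast_sub hk, rpow_natCast]
  ring_nf

/-- For `γ ∈ (0,1)`, `β > 0` and `k ≥ 1`,
`∫_0^1 ∫_{y^γ}^1 x^{β/γ−1}(1−x)^{k−1} dx dy = B(k, β/γ) B(k+β/γ, 1/γ) / B(β/γ, 1/γ)`,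
i.e. the limiting degree distribution of the damaged network at `ε = 0` is the power-law
degree distribution of the undamaged network. -/
theorem integral_eq_beta_product (γ β : ℝ) (hγ : γ ∈ Set.Ioo (0 : ℝ) 1) (hβ : 0 < β)
    (k : ℕ) (hk : 1 ≤ k) :
    (∫ y in (0 : ℝ)..1, ∫ x in (y ^ γ)..1, x ^ (β / γ - 1) * (1 - x) ^ (k - 1))
      = betaFn k (β / γ) * betaFn (k + β / γ) (1 / γ) / betaFn (β / γ) (1 / γ) := by
  have ha : 0 < β / γ := div_pos hβ hγ.1
  have hc : 0 < 1 / γ := one_div_pos.2 hγ.1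
  have hk₀ : (0 : ℝ) < k := Nat.cast_pos.2 hk
  have hf : IntervalIntegrable (fun x => x ^ (β / γ - 1) * (1 - x) ^ (k - 1)) volume 0 1 :=
    (intervalIntegral.intervalIntegrable_rpow' (by linarith)).mul_continuousOn (by fun_prop)
  rw [integral_integral_rpow_swap hγ.1 hf, integral_rpow_mul_betaIntegrand _ _ hk, betaFn_comm,
    eq_div_iff (betaFn_pos ha hc).ne', betaFn_mul_betaFn_add hk₀ ha hc, mul_comm]
end

section
/- Fix ε ∈ (0,1). Let Ã be a continuous linear operator on the Banach space of continuous real-valued functions on [log ε, 0] satisfying Ãh(s) = ∫_{log ε − s}^0 h(s+t) e^{t/2} dt + ∫_0^{−s} h(s+t) e^{t/2} dt for all continuous h and s ∈ [log ε, 0]. Then for every n ∈ ℕ_0 and every s ∈ [log ε, 0], Ã^{n+1}𝟏(s) = 2(1 − ε^{1/2}) (log(1/ε))^n e^{−s/2}, where 𝟏 denotes the constant function with value 1. -/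
/-! `Ã𝟏(s) = ∫_{log ε - s}^{-s} e^{t/2} dt = 2(1 - √ε) e^{-s/2}`, and `g(s) = e^{-s/2}` is an
eigenfunction of `Ã` with eigenvalue `log (1/ε)`: the integrand `g(s+t) e^{t/2}` is the constant
`e^{-s/2}` on an interval of length `-log ε`. Hence `Ã^{n+1}𝟏 = 2(1 - √ε) (log (1/ε))^n g`. -/

theorem ContinuousLinearMap.pow_succ_apply_of_apply_eq_smul {R M : Type*} [CommSemiring R]
    [AddCommMonoid M] [Module R M] [TopologicalSpace M] {A : M →L[R] M} {v g : M} {c μ : R}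
    (hv : A v = c • g) (hg : A g = μ • g) (n : ℕ) : (A ^ (n + 1)) v = (c * μ ^ n) • g := by
  induction n with
  | zero => simpa using hv
  | succ n ih =>
    rw [pow_succ', mul_apply_eq_comp, ih, map_smul, hg, smul_smul, pow_succ, mul_assoc]

theorem integral_exp_half (a b : ℝ) :
    ∫ t in a..b, Real.exp (t / 2) = 2 * (Real.exp (b / 2) - Real.exp (a / 2)) := by
  rw [intervalIntegral.integral_comp_div (fun t => Real.exp t) two_ne_zero, integral_exp,
    smul_eq_mul]

namespace TruncatedExpKernel

variable {a : ℝ} (ha : a ≤ 0)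

/-- The operator `Ã` on `C([a, 0], ℝ)`, with `a = log ε`. -/
noncomputable def apply (h : C(Set.Icc a (0 : ℝ), ℝ)) (s : Set.Icc a (0 : ℝ)) : ℝ :=
  (∫ t in (a - s.1)..(0 : ℝ), h (Set.projIcc a 0 ha (s.1 + t)) * Real.exp (t / 2))
    + ∫ t in (0 : ℝ)..(-s.1), h (Set.projIcc a 0 ha (s.1 + t)) * Real.exp (t / 2)

theorem apply_eq_integral (h : C(Set.Icc a (0 : ℝ), ℝ)) (s : Set.Icc a (0 : ℝ)) :
    apply ha h s =
      ∫ t in (a - s.1)..(-s.1), h (Set.projIcc a 0 ha (s.1 + t)) * Real.exp (t / 2) := by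
  have hcont : Continuous fun t => h (Set.projIcc a 0 ha (s.1 + t)) * Real.exp (t / 2) := by
    fun_prop
  exact intervalIntegral.integral_add_adjacent_intervals (hcont.intervalIntegrable _ _)
    (hcont.intervalIntegrable _ _)

theorem apply_one (s : Set.Icc a (0 : ℝ)) :
    apply ha 1 s = 2 * (1 - Real.exp (a / 2)) * Real.exp (-s.1 / 2) := by
  simp only [apply_eq_integral, ContinuousMap.one_apply, one_mul, integral_exp_half]
  have hsplit : Real.exp ((a - s.1) / 2) = Real.exp (a / 2) * Real.exp (-s.1 / 2) := by
    rw [← Real.exp_add]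
    ring_nf
  rw [hsplit]
  ring

noncomputable def expNegHalf (a : ℝ) : C(Set.Icc a (0 : ℝ), ℝ) :=
  ⟨fun s => Real.exp (-s.1 / 2), by fun_prop⟩

theorem apply_expNegHalf (s : Set.Icc a (0 : ℝ)) :
    apply ha (expNegHalf a) s = -a * Real.exp (-s.1 / 2) := by
  have hconst : Set.EqOn (fun t => expNegHalf a (Set.projIcc a 0 ha (s.1 + t)) * Real.exp (t / 2))
      (fun _ => Real.exp (-s.1 / 2)) (Set.uIcc (a - s.1) (-s.1)) := by
    intro t ht
    rw [Set.uIcc_of_le (by linarith)] at ht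
    simp only [expNegHalf, ContinuousMap.coe_mk,
      Set.projIcc_of_mem ha (⟨by linarith [ht.1], by linarith [ht.2]⟩ : s.1 + t ∈ Set.Icc a 0),
      ← Real.exp_add]
    ring_nf
  rw [apply_eq_integral, intervalIntegral.integral_congr hconst, intervalIntegral.integral_const,
    smul_eq_mul]
  ring

end TruncatedExpKernel

/-- For `ε ∈ (0,1)` and the operator `Ã` on `C([log ε, 0], ℝ)` given by
`Ãh(s) = ∫_{log ε − s}^0 h(s+t) e^{t/2} dt + ∫_0^{−s} h(s+t) e^{t/2} dt`, one has
`Ã^{n+1} 𝟏 (s) = 2 (1 − ε^{1/2}) (log(1/ε))^n e^{−s/2}` for all `n` and `s`. -/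
theorem iterate_of_simple_operator_on_one (ε : ℝ) (hε : ε ∈ Set.Ioo (0 : ℝ) 1)
    (A : C(Set.Icc (Real.log ε) (0 : ℝ), ℝ) →L[ℝ] C(Set.Icc (Real.log ε) (0 : ℝ), ℝ))
    (hA : ∀ (h : C(Set.Icc (Real.log ε) (0 : ℝ), ℝ)) (s : Set.Icc (Real.log ε) (0 : ℝ)),
      A h s =
        (∫ t in (Real.log ε - s.1)..(0 : ℝ),
          h (Set.projIcc (Real.log ε) 0 (Real.log_nonpos hε.1.le hε.2.le) (s.1 + t))
            * Real.exp (t / 2))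
        + ∫ t in (0 : ℝ)..(-s.1),
          h (Set.projIcc (Real.log ε) 0 (Real.log_nonpos hε.1.le hε.2.le) (s.1 + t))
            * Real.exp (t / 2)) :
    ∀ (n : ℕ) (s : Set.Icc (Real.log ε) (0 : ℝ)),
      (A ^ (n + 1)) (1 : C(Set.Icc (Real.log ε) (0 : ℝ), ℝ)) s
        = 2 * (1 - Real.sqrt ε) * Real.log (1 / ε) ^ n * Real.exp (-s.1 / 2) := by
  have hlog := Real.log_nonpos hε.1.le hε.2.le
  have hsqrt : Real.sqrt ε = Real.exp (Real.log ε / 2) := by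
    rw [Real.exp_half, Real.exp_log hε.1]
  have hA_one : A 1 = (2 * (1 - Real.sqrt ε)) • TruncatedExpKernel.expNegHalf (Real.log ε) := by
    ext s
    rw [hsqrt]
    exact (hA 1 s).trans (TruncatedExpKernel.apply_one hlog s)
  have hA_eigen : A (TruncatedExpKernel.expNegHalf (Real.log ε))
      = Real.log (1 / ε) • TruncatedExpKernel.expNegHalf (Real.log ε) := by
    ext s
    rw [one_div, Real.log_inv]
    exact (hA _ s).trans (TruncatedExpKernel.apply_expNegHalf hlog s)
  intro n s
  rw [ContinuousLinearMap.pow_succ_apply_of_apply_eq_smul hA_one hA_eigen n]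
  rfl
end

section
/- Fix ε ∈ (0,1). Let Ã be a continuous linear operator on the complex Banach space C([log ε, 0], ℂ) of continuous complex-valued functions with the supremum norm, satisfying Ãh(s) = ∫_{log ε − s}^0 h(s+t) e^{t/2} dt + ∫_0^{−s} h(s+t) e^{t/2} dt for all h and s ∈ [log ε, 0]. Then the spectral radius of Ã equals log(1/ε). -/
/-!
Substituting `u = s + t` merges the two integrals into `e^{-s/2} ∫_L^0 h(u) e^{u/2} du`
(with `L = log ε`), so `Ã` has rank one: `Ã h = c(h) • φ` with `φ(s) = e^{-s/2}`, and
`c(φ) = -L`. Hence `Ã² = -L • Ã`; this confines the spectrum to `{0, -L}`, and since `Ã ≠ 0`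
the value `-L = log(1/ε)` does lie in it.
-/

open Set

open Polynomial in
theorem spectrum_subset_of_mul_self_eq_smul {𝕜 A : Type*} [Field 𝕜] [Ring A] [Algebra 𝕜 A]
    {a : A} {c : 𝕜} (ha : a * a = c • a) : spectrum 𝕜 a ⊆ {0, c} := by
  nontriviality A
  refine image_subset_iff.mp (spectrum.subset_polynomial_aeval a (X * X - C c * X)) |>.trans
    fun k hk => ?_
  have hk : k * k - c * k = 0 := by simpa [ha, Algebra.smul_def] using hk
  simpa [sub_eq_zero] using (by linear_combination hk : k * (k - c) = 0)

theorem mem_spectrum_of_mul_self_eq_smul {𝕜 A : Type*} [CommRing 𝕜] [Ring A] [Algebra 𝕜 A]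
    {a : A} {c : 𝕜} (ha : a * a = c • a) (ha0 : a ≠ 0) : c ∈ spectrum 𝕜 a := by
  refine spectrum.mem_iff.mpr fun hu => ha0 ?_
  have : (algebraMap 𝕜 A c - a) * a = 0 := by
    rw [sub_mul, ha, Algebra.algebraMap_eq_smul_one, smul_one_mul, sub_self]
  simpa using hu.mul_right_eq_zero.mp this

theorem spectralRadius_eq_of_mul_self_eq_smul {𝕜 A : Type*} [NormedField 𝕜] [Ring A]
    [Algebra 𝕜 A] {a : A} {c : 𝕜} (ha : a * a = c • a) (ha0 : a ≠ 0) :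
    spectralRadius 𝕜 a = ‖c‖₊ := by
  refine le_antisymm (iSup₂_le fun k hk => ?_) (le_iSup₂ (f := fun k (_ : k ∈ spectrum 𝕜 a) =>
    (‖k‖₊ : ENNReal)) c (mem_spectrum_of_mul_self_eq_smul ha ha0))
  rcases spectrum_subset_of_mul_self_eq_smul ha hk with rfl | rfl <;> simp

theorem ContinuousLinearMap.mul_self_eq_smul_of_apply_eq_smul {𝕜 E : Type*} [CommSemiring 𝕜]
    [TopologicalSpace E] [AddCommMonoid E] [Module 𝕜 E] [ContinuousConstSMul 𝕜 E]
    {A : E →L[𝕜] E} {f : E → 𝕜} {φ : E} {c : 𝕜}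
    (hA : ∀ x, A x = f x • φ) (hφ : A φ = c • φ) : A * A = c • A := by
  ext x
  rw [mul_apply_eq_comp, _root_.smul_apply, hA x, map_smul, hφ, smul_smul, smul_smul, mul_comm]

theorem integral_comp_add_mul_exp_half_add {f : ℝ → ℂ} (hf : Continuous f) (L s : ℝ) :
    ((∫ t in (L - s)..0, f (s + t) * (Real.exp (t / 2) : ℂ)) +
      ∫ t in (0 : ℝ)..(-s), f (s + t) * (Real.exp (t / 2) : ℂ)) =
      (∫ u in L..0, f u * (Real.exp (u / 2) : ℂ)) * (Real.exp (-s / 2) : ℂ) := by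
  set g : ℝ → ℂ := fun u => f u * (Real.exp (u / 2) : ℂ)
  have hg : Continuous g := by fun_prop
  have hshift : ∀ t, f (s + t) * (Real.exp (t / 2) : ℂ) = g (s + t) * (Real.exp (-s / 2) : ℂ) := by
    intro t
    rw [mul_assoc, ← Complex.ofReal_mul, ← Real.exp_add, show (s + t) / 2 + -s / 2 = t / 2 by ring]
  simp only [hshift, intervalIntegral.integral_mul_const, ← add_mul,
    intervalIntegral.integral_comp_add_left g, add_sub_cancel, add_zero, add_neg_cancel]
  rw [intervalIntegral.integral_add_adjacent_intervals (hg.intervalIntegrable _ _)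
      (hg.intervalIntegrable _ _)]

section

variable {L : ℝ}

noncomputable def expNegHalf (L : ℝ) : C(Icc L 0, ℂ) :=
  ⟨fun s => (Real.exp (-s.1 / 2) : ℂ), by fun_prop⟩

theorem expNegHalf_ne_zero (hL : L ≤ 0) : expNegHalf L ≠ 0 := by
  intro h0
  simpa [expNegHalf] using DFunLike.congr_fun h0 ⟨0, hL, le_rfl⟩

theorem integral_expNegHalf_mul_exp_half (hL : L ≤ 0) :
    ∫ u in L..0, expNegHalf L (projIcc L 0 hL u) * (Real.exp (u / 2) : ℂ) = -L := by
  have hone : ∀ u ∈ uIcc L 0,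
      expNegHalf L (projIcc L 0 hL u) * (Real.exp (u / 2) : ℂ) = 1 := by
    intro u hu
    rw [uIcc_of_le hL] at hu
    rw [projIcc_of_mem hL hu, expNegHalf, ContinuousMap.coe_mk, ← Complex.ofReal_mul,
      ← Real.exp_add, show -u / 2 + u / 2 = 0 by ring, Real.exp_zero, Complex.ofReal_one]
  rw [intervalIntegral.integral_congr hone]
  simp

theorem apply_eq_integral_smul_expNegHalf (hL : L ≤ 0) {A : C(Icc L 0, ℂ) →L[ℂ] C(Icc L 0, ℂ)}
    (hA : ∀ (h : C(Icc L 0, ℂ)) (s : Icc L 0), A h s =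
      (∫ t in (L - s.1)..0, h (projIcc L 0 hL (s.1 + t)) * (Real.exp (t / 2) : ℂ)) +
        ∫ t in (0 : ℝ)..(-s.1), h (projIcc L 0 hL (s.1 + t)) * (Real.exp (t / 2) : ℂ))
    (h : C(Icc L 0, ℂ)) :
    A h = (∫ u in L..0, h (projIcc L 0 hL u) * (Real.exp (u / 2) : ℂ)) • expNegHalf L := by
  ext s
  rw [hA, integral_comp_add_mul_exp_half_add (f := fun u => h (projIcc L 0 hL u)) (by fun_prop)]
  rfl

end

/-- For `ε ∈ (0,1)` and the operator `Ã` on the complex Banach space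
`C([log ε, 0], ℂ)` given by
`Ãh(s) = ∫_{log ε − s}^0 h(s+t) e^{t/2} dt + ∫_0^{−s} h(s+t) e^{t/2} dt`,
the spectral radius of `Ã` equals `log(1/ε)`. -/
theorem spectralRadius_of_simple_operator (ε : ℝ) (hε : ε ∈ Set.Ioo (0 : ℝ) 1)
    (A : C(Set.Icc (Real.log ε) (0 : ℝ), ℂ) →L[ℂ] C(Set.Icc (Real.log ε) (0 : ℝ), ℂ))
    (hA : ∀ (h : C(Set.Icc (Real.log ε) (0 : ℝ), ℂ)) (s : Set.Icc (Real.log ε) (0 : ℝ)),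
      A h s =
        (∫ t in (Real.log ε - s.1)..(0 : ℝ),
          h (Set.projIcc (Real.log ε) 0 (Real.log_nonpos hε.1.le hε.2.le) (s.1 + t))
            * (Real.exp (t / 2) : ℂ))
        + ∫ t in (0 : ℝ)..(-s.1),
          h (Set.projIcc (Real.log ε) 0 (Real.log_nonpos hε.1.le hε.2.le) (s.1 + t))
            * (Real.exp (t / 2) : ℂ)) :
    spectralRadius ℂ A = ENNReal.ofReal (Real.log (1 / ε)) := by
  have hL : Real.log ε ≤ 0 := Real.log_nonpos hε.1.le hε.2.le
  have hrank := apply_eq_integral_smul_expNegHalf hL hA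
  have hAφ : A (expNegHalf _) = (-Real.log ε : ℂ) • expNegHalf _ := by
    rw [hrank, integral_expNegHalf_mul_exp_half]
  have hAA : A * A = (-Real.log ε : ℂ) • A :=
    ContinuousLinearMap.mul_self_eq_smul_of_apply_eq_smul hrank hAφ
  have hA0 : A ≠ 0 := by
    rintro rfl
    have hlog : (-Real.log ε : ℂ) ≠ 0 := by simpa using (Real.log_neg hε.1 hε.2).ne
    exact smul_ne_zero hlog (expNegHalf_ne_zero hL) hAφ.symm
  rw [spectralRadius_eq_of_mul_self_eq_smul hAA hA0, one_div, Real.log_inv, ← enorm_eq_nnnorm,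
    ← ofReal_norm, norm_neg, Complex.norm_real, Real.norm_eq_abs, abs_of_nonpos hL]
end

section
/- Fix ε ∈ (0,1), γ = 1/2 and β > 0. Let A be a continuous linear operator on the complex Banach space C(Φ) of continuous complex-valued functions on Φ = [log ε, 0] × {ℓ, r}, satisfying Ag(s,α) = ∫_{log ε − s}^0 g(s+t, r) β e^{(1−γ)t} dt + ∫_0^{−s} g(s+t, ℓ) a_α e^{γ t} dt for all g ∈ C(Φ) and (s,α) ∈ Φ, where a_ℓ = β and a_r = γ + β. Then β · log(1/ε) ≤ ρ_ε(A) ≤ (γ + β) · log(1/ε), where ρ_ε(A) denotes the spectral radius of A. -/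
/-!
For `γ = 1/2` both kernels are `e^{t/2}`, so the weight `w(s) = e^{-s/2}` is almost an
eigenfunction: `A w (s, α) = (β (s - log ε) + a_α (-s)) w(s)`, and the factor lies between
`β log(1/ε)` and `(γ + β) log(1/ε)`. Because `A` has a nonnegative kernel, these comparisons with
`w` pass to every power of `A`; as `1 ≤ w ≤ ε^{-1/2}`, the norms `‖Aⁿ‖` then lie within constant
factors of `(β log(1/ε))ⁿ` and `((γ + β) log(1/ε))ⁿ`, and Gelfand's formula gives both bounds.
-/

open MeasureTheory Set Real Filter Topology

lemma tendsto_mul_pow_rpow_one_div {C M : ℝ} (hC : 0 < C) (hM : 0 ≤ M) :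
    Tendsto (fun n : ℕ => (C * M ^ n) ^ (1 / n : ℝ)) atTop (𝓝 M) := by
  have hC' : Tendsto (fun n : ℕ => C ^ (1 / n : ℝ)) atTop (𝓝 1) := by
    simpa [Function.comp_def] using
      (continuousAt_const_rpow hC.ne').tendsto.comp tendsto_one_div_atTop_nhds_zero_nat
  refine (by simpa using hC'.mul_const M : Tendsto _ _ _).congr' ?_
  filter_upwards [eventually_ge_atTop 1] with n hn
  rw [mul_rpow hC.le (by positivity), ← rpow_natCast, ← rpow_mul hM,
    mul_one_div_cancel (by positivity), rpow_one, one_div]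

namespace spectrum

variable {𝔸 : Type*} [NormedRing 𝔸] [NormedAlgebra ℂ 𝔸] [CompleteSpace 𝔸]

lemma spectralRadius_le_of_norm_pow_le {a : 𝔸} {C M : ℝ} (hM : 0 ≤ M)
    (h : ∀ n : ℕ, ‖a ^ n‖ ≤ C * M ^ n) : spectralRadius ℂ a ≤ ENNReal.ofReal M := by
  have h' (n : ℕ) : ‖a ^ n‖ ≤ max C 1 * M ^ n :=
    (h n).trans (by gcongr; exact le_max_left _ _)
  refine le_of_tendsto_of_tendsto' (pow_norm_pow_one_div_tendsto_nhds_spectralRadius a)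
    (ENNReal.tendsto_ofReal (tendsto_mul_pow_rpow_one_div (C := max C 1) (by positivity) hM))
    fun n => ?_
  exact ENNReal.ofReal_le_ofReal (rpow_le_rpow (norm_nonneg _) (h' n) (by positivity))

lemma ofReal_le_spectralRadius_of_le_norm_pow {a : 𝔸} {c m : ℝ} (hc : 0 < c) (hm : 0 ≤ m)
    (h : ∀ n : ℕ, c * m ^ n ≤ ‖a ^ n‖) : ENNReal.ofReal m ≤ spectralRadius ℂ a := by
  refine le_of_tendsto_of_tendsto' (ENNReal.tendsto_ofReal (tendsto_mul_pow_rpow_one_div hc hm))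
    (pow_norm_pow_one_div_tendsto_nhds_spectralRadius a) fun n => ?_
  exact ENNReal.ofReal_le_ofReal (rpow_le_rpow (by positivity) (h n) (by positivity))

end spectrum

namespace ContinuousMap

variable {X : Type*} [TopologicalSpace X] [CompactSpace X] {T : C(X, ℂ) →L[ℂ] C(X, ℂ)}
  {w : C(X, ℝ)} {w₀ : ℝ}

lemma norm_pow_apply_le_of_weighted_bound {M : ℝ}
    (hT : ∀ c g, 0 ≤ c → (∀ x, ‖g x‖ ≤ c * w x) → ∀ x, ‖T g x‖ ≤ M * c * w x)
    (hM : 0 ≤ M) (n : ℕ) {c : ℝ} (hc : 0 ≤ c) {g : C(X, ℂ)} (hg : ∀ x, ‖g x‖ ≤ c * w x)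
    (x : X) : ‖(T ^ n) g x‖ ≤ M ^ n * c * w x := by
  induction n generalizing c g with
  | zero => simpa using hg x
  | succ n ih =>
    rw [pow_succ M, mul_assoc (M ^ n)]
    exact ih (by positivity) (hT c g hc hg)

lemma le_re_pow_apply_of_weighted_bound {m : ℝ}
    (hT : ∀ c g, 0 ≤ c → (∀ x, c * w x ≤ (g x).re) → ∀ x, m * c * w x ≤ (T g x).re)
    (hm : 0 ≤ m) (n : ℕ) {c : ℝ} (hc : 0 ≤ c) {g : C(X, ℂ)} (hg : ∀ x, c * w x ≤ (g x).re)
    (x : X) : m ^ n * c * w x ≤ ((T ^ n) g x).re := by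
  induction n generalizing c g with
  | zero => simpa using hg x
  | succ n ih =>
    rw [pow_succ m, mul_assoc (m ^ n)]
    exact ih (by positivity) (hT c g hc hg)

lemma norm_pow_le_of_weighted_bound (hw₀ : 0 < w₀) (hw : ∀ x, w₀ ≤ w x) {M : ℝ} (hM : 0 ≤ M)
    (hT : ∀ c g, 0 ≤ c → (∀ x, ‖g x‖ ≤ c * w x) → ∀ x, ‖T g x‖ ≤ M * c * w x) (n : ℕ) :
    ‖T ^ n‖ ≤ ‖w‖ / w₀ * M ^ n := by
  refine ContinuousLinearMap.opNorm_le_bound _ (by positivity) fun g => ?_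
  have hg (x : X) : ‖g x‖ ≤ ‖g‖ / w₀ * w x :=
    (g.norm_coe_le_norm x).trans <| by
      rw [div_mul_eq_mul_div, le_div_iff₀ hw₀]; gcongr; exact hw x
  refine (ContinuousMap.norm_le _ (by positivity)).2 fun x => ?_
  calc ‖(T ^ n) g x‖ ≤ M ^ n * (‖g‖ / w₀) * w x :=
        norm_pow_apply_le_of_weighted_bound hT hM n (by positivity) hg x
    _ ≤ M ^ n * (‖g‖ / w₀) * ‖w‖ := by
        gcongr; exact (le_norm_self _).trans (w.norm_coe_le_norm x)
    _ = ‖w‖ / w₀ * M ^ n * ‖g‖ := by ring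

lemma le_norm_pow_mul_norm_of_weighted_bound (hw : ∀ x, w₀ ≤ w x) {m : ℝ} (hm : 0 ≤ m)
    (hT : ∀ c g, 0 ≤ c → (∀ x, c * w x ≤ (g x).re) → ∀ x, m * c * w x ≤ (T g x).re) (n : ℕ)
    (x : X) : w₀ * m ^ n ≤ ‖T ^ n‖ * ‖w‖ := by
  let wℂ : C(X, ℂ) := ⟨fun x => (w x : ℂ), by fun_prop⟩
  have hwℂ : ‖wℂ‖ ≤ ‖w‖ := (ContinuousMap.norm_le _ (norm_nonneg _)).2 fun x => by
    simpa [wℂ] using w.norm_coe_le_norm x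
  calc w₀ * m ^ n ≤ m ^ n * 1 * w x := by nlinarith [hw x, pow_nonneg hm n]
    _ ≤ ((T ^ n) wℂ x).re :=
        le_re_pow_apply_of_weighted_bound hT hm n zero_le_one (fun x => by simp [wℂ]) x
    _ ≤ ‖(T ^ n) wℂ‖ := (Complex.re_le_norm _).trans (((T ^ n) wℂ).norm_coe_le_norm x)
    _ ≤ ‖T ^ n‖ * ‖w‖ := ((T ^ n).le_opNorm wℂ).trans (by gcongr)

lemma spectralRadius_le_of_weighted_bound (hw₀ : 0 < w₀) (hw : ∀ x, w₀ ≤ w x) {M : ℝ}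
    (hM : 0 ≤ M)
    (hT : ∀ c g, 0 ≤ c → (∀ x, ‖g x‖ ≤ c * w x) → ∀ x, ‖T g x‖ ≤ M * c * w x) :
    spectralRadius ℂ T ≤ ENNReal.ofReal M :=
  spectrum.spectralRadius_le_of_norm_pow_le (a := T) hM
    (norm_pow_le_of_weighted_bound hw₀ hw hM hT)

lemma ofReal_le_spectralRadius_of_weighted_bound [Nonempty X] (hw₀ : 0 < w₀)
    (hw : ∀ x, w₀ ≤ w x) {m : ℝ} (hm : 0 ≤ m)
    (hT : ∀ c g, 0 ≤ c → (∀ x, c * w x ≤ (g x).re) → ∀ x, m * c * w x ≤ (T g x).re) :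
    ENNReal.ofReal m ≤ spectralRadius ℂ T := by
  obtain ⟨x⟩ := ‹Nonempty X›
  have hw_pos : 0 < ‖w‖ :=
    hw₀.trans_le ((hw x).trans ((le_norm_self _).trans (w.norm_coe_le_norm x)))
  refine spectrum.ofReal_le_spectralRadius_of_le_norm_pow (a := T) (c := w₀ / ‖w‖)
    (by positivity) hm fun n => ?_
  rw [div_mul_eq_mul_div, div_le_iff₀ hw_pos]
  exact le_norm_pow_mul_norm_of_weighted_bound hw hm hT n x

end ContinuousMap

noncomputable section IdealizedBranching

variable {L : ℝ} (hL : L ≤ 0)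

def expWeight (L κ : ℝ) : C(Icc L 0 × Bool, ℝ) := ⟨fun y => exp (-κ * y.1), by fun_prop⟩

lemma expWeight_apply (κ : ℝ) (y : Icc L 0 × Bool) :
    expWeight L κ y = exp (-κ * y.1) := rfl

lemma one_le_expWeight {κ : ℝ} (hκ : 0 ≤ κ) (y : Icc L 0 × Bool) : 1 ≤ expWeight L κ y :=
  one_le_exp (by nlinarith [y.1.2.2])

def ibpFormula (β γ : ℝ) (g : C(Icc L 0 × Bool, ℂ)) (s : Icc L 0) (α : Bool) : ℂ :=
  (∫ t in (L - s)..0, g (projIcc L 0 hL (s + t), true) * ((β * exp ((1 - γ) * t) : ℝ) : ℂ))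
    + ∫ t in 0..(-s),
      g (projIcc L 0 hL (s + t), false) * (((if α then γ + β else β) * exp (γ * t) : ℝ) : ℂ)

variable {κ k c : ℝ} {g : C(Icc L 0 × Bool, ℂ)} (s : Icc L 0) (b : Bool) {u v : ℝ}

lemma expWeight_projIcc_mul_exp {t : ℝ} (ht : (s : ℝ) + t ∈ Icc L 0) :
    expWeight L κ (projIcc L 0 hL (s + t), b) * exp (κ * t) = exp (-κ * s) := by
  rw [expWeight_apply, projIcc_of_mem hL ht, ← exp_add]
  ring_nf

lemma norm_integral_kernel_le (hk : 0 ≤ k) (hg : ∀ y, ‖g y‖ ≤ c * expWeight L κ y)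
    (huv : u ≤ v) (hu : L ≤ s + u) (hv : s + v ≤ 0) :
    ‖∫ t in u..v, g (projIcc L 0 hL (s + t), b) * ((k * exp (κ * t) : ℝ) : ℂ)‖
      ≤ c * k * exp (-κ * s) * (v - u) := by
  rw [← abs_of_nonneg (sub_nonneg.2 huv)]
  refine intervalIntegral.norm_integral_le_of_norm_le_const fun t ht => ?_
  rw [uIoc_of_le huv] at ht
  have hst : (s : ℝ) + t ∈ Icc L 0 := ⟨by linarith [ht.1], by linarith [ht.2]⟩
  rw [norm_mul, Complex.norm_real, norm_of_nonneg (by positivity),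
    ← expWeight_projIcc_mul_exp hL s b hst]
  calc ‖g (projIcc L 0 hL (s + t), b)‖ * (k * exp (κ * t))
      ≤ c * expWeight L κ (projIcc L 0 hL (s + t), b) * (k * exp (κ * t)) := by
        gcongr; exact hg _
    _ = _ := by ring

lemma le_re_integral_kernel (hk : 0 ≤ k) (hg : ∀ y, c * expWeight L κ y ≤ (g y).re)
    (huv : u ≤ v) (hu : L ≤ s + u) (hv : s + v ≤ 0) :
    c * k * exp (-κ * s) * (v - u)
      ≤ (∫ t in u..v, g (projIcc L 0 hL (s + t), b) * ((k * exp (κ * t) : ℝ) : ℂ)).re := by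
  have hcont : Continuous fun t => g (projIcc L 0 hL (s + t), b) * ((k * exp (κ * t) : ℝ) : ℂ) := by
    fun_prop
  rw [← RCLike.re_eq_complex_re,
    ← intervalIntegral.intervalIntegral_re (hcont.intervalIntegrable u v)]
  have hconst : ∫ _ in u..v, c * k * exp (-κ * s) = c * k * exp (-κ * s) * (v - u) := by
    rw [intervalIntegral.integral_const, smul_eq_mul, mul_comm]
  rw [← hconst]
  refine intervalIntegral.integral_mono_on huv intervalIntegrable_const
    ((RCLike.continuous_re.comp hcont).intervalIntegrable u v) fun t ht => ?_
  have hst : (s : ℝ) + t ∈ Icc L 0 := ⟨by linarith [ht.1], by linarith [ht.2]⟩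
  rw [RCLike.re_eq_complex_re, Complex.re_mul_ofReal, ← expWeight_projIcc_mul_exp hL s b hst]
  calc c * k * (expWeight L κ (projIcc L 0 hL (s + t), b) * exp (κ * t))
      = c * expWeight L κ (projIcc L 0 hL (s + t), b) * (k * exp (κ * t)) := by ring
    _ ≤ _ := by gcongr; exact hg _

variable {β : ℝ} {A : C(Icc L 0 × Bool, ℂ) →L[ℂ] C(Icc L 0 × Bool, ℂ)}

lemma norm_apply_le_of_eq_ibpFormula (hβ : 0 ≤ β)
    (hA : ∀ g s α, A g (s, α) = ibpFormula hL β (1 / 2) g s α) (c : ℝ)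
    (g : C(Icc L 0 × Bool, ℂ)) (hc : 0 ≤ c) (hg : ∀ y, ‖g y‖ ≤ c * expWeight L (1 / 2) y) :
    ∀ y, ‖A g y‖ ≤ (1 / 2 + β) * -L * c * expWeight L (1 / 2) y := by
  rintro ⟨s, α⟩
  obtain ⟨hLs, hs0⟩ := s.2
  set a : ℝ := if α then 1 / 2 + β else β
  have ha : 0 ≤ a ∧ a ≤ 1 / 2 + β := by cases α <;> constructor <;> simp [a] <;> linarith
  have h₁ := norm_integral_kernel_le hL s true hβ hg (u := L - s) (v := 0)
    (by linarith) (by linarith) (by linarith)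
  have h₂ := norm_integral_kernel_le hL s false ha.1 hg (u := 0) (v := -s)
    (by linarith) (by linarith) (by linarith)
  rw [hA, ibpFormula, show (1 : ℝ) - 1 / 2 = 1 / 2 by norm_num]
  refine (norm_add_le _ _).trans ?_
  have hce : 0 ≤ c * exp (-(1 / 2) * s) := by positivity
  rw [expWeight_apply]
  nlinarith [mul_nonneg hce (sub_nonneg.2 hLs),
    mul_nonneg (mul_nonneg hce (sub_nonneg.2 ha.2)) (neg_nonneg.2 hs0)]

lemma le_re_apply_of_eq_ibpFormula (hβ : 0 ≤ β)
    (hA : ∀ g s α, A g (s, α) = ibpFormula hL β (1 / 2) g s α) (c : ℝ)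
    (g : C(Icc L 0 × Bool, ℂ)) (hc : 0 ≤ c) (hg : ∀ y, c * expWeight L (1 / 2) y ≤ (g y).re) :
    ∀ y, β * -L * c * expWeight L (1 / 2) y ≤ (A g y).re := by
  rintro ⟨s, α⟩
  obtain ⟨hLs, hs0⟩ := s.2
  set a : ℝ := if α then 1 / 2 + β else β
  have ha : β ≤ a := by cases α <;> simp [a]
  have h₁ := le_re_integral_kernel hL s true hβ hg (u := L - s) (v := 0)
    (by linarith) (by linarith) (by linarith)
  have h₂ := le_re_integral_kernel hL s false (hβ.trans ha) hg (u := 0) (v := -s)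
    (by linarith) (by linarith) (by linarith)
  rw [hA, ibpFormula, show (1 : ℝ) - 1 / 2 = 1 / 2 by norm_num, Complex.add_re]
  have hce : 0 ≤ c * exp (-(1 / 2) * s) := by positivity
  rw [expWeight_apply]
  nlinarith [mul_nonneg (mul_nonneg hce (sub_nonneg.2 ha)) (neg_nonneg.2 hs0)]

end IdealizedBranching

/-- For `ε ∈ (0,1)`, `γ = 1/2`, `β > 0`, the operator `A` of the idealized
branching process on `C([log ε, 0] × {ℓ, r}, ℂ)` (with `ℓ = false`, `r = true`,
`a_ℓ = β`, `a_r = γ + β`) has spectral radius between `β log(1/ε)` and `(γ+β) log(1/ε)`. -/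
theorem spectralRadius_IBP_operator_critical (ε γ β : ℝ) (hε : ε ∈ Set.Ioo (0 : ℝ) 1)
    (hγ : γ = 1 / 2) (hβ : 0 < β)
    (A : C(Set.Icc (Real.log ε) (0 : ℝ) × Bool, ℂ) →L[ℂ]
         C(Set.Icc (Real.log ε) (0 : ℝ) × Bool, ℂ))
    (hA : ∀ (g : C(Set.Icc (Real.log ε) (0 : ℝ) × Bool, ℂ))
        (s : Set.Icc (Real.log ε) (0 : ℝ)) (α : Bool),
      A g (s, α) =
        (∫ t in (Real.log ε - s.1)..(0 : ℝ),
          g (Set.projIcc (Real.log ε) 0 (Real.log_nonpos hε.1.le hε.2.le) (s.1 + t), true)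
            * ((β * Real.exp ((1 - γ) * t) : ℝ) : ℂ))
        + ∫ t in (0 : ℝ)..(-s.1),
          g (Set.projIcc (Real.log ε) 0 (Real.log_nonpos hε.1.le hε.2.le) (s.1 + t), false)
            * (((if α then γ + β else β) * Real.exp (γ * t) : ℝ) : ℂ)) :
    ENNReal.ofReal (β * Real.log (1 / ε)) ≤ spectralRadius ℂ A ∧
      spectralRadius ℂ A ≤ ENNReal.ofReal ((γ + β) * Real.log (1 / ε)) := by
  subst hγ
  have hL : log ε ≤ 0 := log_nonpos hε.1.le hε.2.le
  have : Nonempty (Icc (log ε) 0 × Bool) := ⟨(⟨0, right_mem_Icc.2 hL⟩, true)⟩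
  have hw : ∀ y, 1 ≤ expWeight (log ε) (1 / 2) y := one_le_expWeight (by norm_num)
  rw [one_div, log_inv]
  exact ⟨ContinuousMap.ofReal_le_spectralRadius_of_weighted_bound one_pos hw
      (mul_nonneg hβ.le (neg_nonneg.2 hL)) (le_re_apply_of_eq_ibpFormula hL hβ.le hA),
    ContinuousMap.spectralRadius_le_of_weighted_bound one_pos hw
      (by nlinarith) (norm_apply_le_of_eq_ibpFormula hL hβ.le hA)⟩
end

section
/- Fix ε ∈ (0,1), γ ∈ [0,1) and β > 0. Let A be a continuous linear operator on the Banach space C(Φ, ℝ) of continuous real-valued functions on Φ = [log ε, 0] × {ℓ, r}, satisfying Ag(s,α) = ∫_{log ε − s}^0 g(s+t, r) β e^{(1−γ)t} dt + ∫_0^{−s} g(s+t, ℓ) a_α e^{γ t} dt for all g and (s,α) ∈ Φ, where a_ℓ = β and a_r = γ + β. Then for every continuous g : Φ → ℝ with g ≥ 0 and g not identically 0, the function A²g is strictly positive at every point of Φ; in particular min_{φ ∈ Φ} A²g(φ) > 0. -/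
open MeasureTheory

private lemma integral_pos_aux {f : ℝ → ℝ} (hf : Continuous f) {a b : ℝ}
    (hab : a < b) (hnn : ∀ t, 0 ≤ f t) {x : ℝ} (hx : x ∈ Set.Icc a b)
    (hfx : 0 < f x) : 0 < ∫ t in a..b, f t := by
  obtain ⟨δ, hδ, hball⟩ := Metric.continuousAt_iff.mp (hf.continuousAt (x := x)) (f x) hfx
  set c := max a (x - δ/2) with hc
  set d := min b (x + δ/2) with hd
  have hac : a ≤ c := le_max_left _ _
  have hdb : d ≤ b := min_le_left _ _
  have hcd : c < d :=
    lt_min (max_lt hab (by linarith [hx.2])) (max_lt (by linarith [hx.1]) (by linarith))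
  have hpos : ∀ y ∈ Set.Ioo c d, 0 < f y := by
    intro y hy
    have h1 : x - δ/2 < y := lt_of_le_of_lt (le_max_right a _) hy.1
    have h2 : y < x + δ/2 := lt_of_lt_of_le hy.2 (min_le_right b _)
    have hdist : dist y x < δ := by
      rw [Real.dist_eq, abs_lt]; constructor <;> linarith
    have := hball hdist
    rw [Real.dist_eq, abs_lt] at this
    linarith [this.1]
  have hi : ∀ p q : ℝ, IntervalIntegrable f volume p q := fun p q => hf.intervalIntegrable p q
  have e1 : (∫ t in a..c, f t) + (∫ t in c..b, f t) = ∫ t in a..b, f t :=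
    intervalIntegral.integral_add_adjacent_intervals (hi _ _) (hi _ _)
  have e2 : (∫ t in c..d, f t) + (∫ t in d..b, f t) = ∫ t in c..b, f t :=
    intervalIntegral.integral_add_adjacent_intervals (hi _ _) (hi _ _)
  have n1 : 0 ≤ ∫ t in a..c, f t := intervalIntegral.integral_nonneg hac (fun u _ => hnn u)
  have n3 : 0 ≤ ∫ t in d..b, f t := intervalIntegral.integral_nonneg hdb (fun u _ => hnn u)
  have p2 : 0 < ∫ t in c..d, f t :=
    intervalIntegral.intervalIntegral_pos_of_pos_on (hi _ _) hpos hcd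
  linarith

/-- For `ε ∈ (0,1)`, `γ ∈ [0,1)`, `β > 0`, the operator `A` of the
idealized branching process on `C([log ε, 0] × {ℓ, r}, ℝ)` (with `ℓ = false`, `r = true`,
`a_ℓ = β`, `a_r = γ + β`) is strictly positive in two steps: for every continuous
`g ≥ 0` with `g ≢ 0`, `A²g` is strictly positive at every point of the type space. -/
theorem IBP_operator_two_step_positive (ε γ β : ℝ) (hε : ε ∈ Set.Ioo (0 : ℝ) 1)
    (hγ : γ ∈ Set.Ico (0 : ℝ) 1) (hβ : 0 < β)
    (A : C(Set.Icc (Real.log ε) (0 : ℝ) × Bool, ℝ) →L[ℝ]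
         C(Set.Icc (Real.log ε) (0 : ℝ) × Bool, ℝ))
    (hA : ∀ (g : C(Set.Icc (Real.log ε) (0 : ℝ) × Bool, ℝ))
        (s : Set.Icc (Real.log ε) (0 : ℝ)) (α : Bool),
      A g (s, α) =
        (∫ t in (Real.log ε - s.1)..(0 : ℝ),
          g (Set.projIcc (Real.log ε) 0 (Real.log_nonpos hε.1.le hε.2.le) (s.1 + t), true)
            * (β * Real.exp ((1 - γ) * t)))
        + ∫ t in (0 : ℝ)..(-s.1),
          g (Set.projIcc (Real.log ε) 0 (Real.log_nonpos hε.1.le hε.2.le) (s.1 + t), false)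
            * ((if α then γ + β else β) * Real.exp (γ * t))) :
    ∀ g : C(Set.Icc (Real.log ε) (0 : ℝ) × Bool, ℝ),
      (∀ φ, 0 ≤ g φ) → g ≠ 0 →
        ∀ φ, 0 < A (A g) φ := by
  have hL0 : Real.log ε < 0 := Real.log_neg hε.1 hε.2
  have hle : Real.log ε ≤ 0 := hL0.le
  -- continuity of the integrands
  have contF : ∀ (g : C(Set.Icc (Real.log ε) (0:ℝ) × Bool, ℝ)) (s : ℝ) (b : Bool) (c θ : ℝ),
      Continuous fun t : ℝ =>
        g (Set.projIcc (Real.log ε) 0 (Real.log_nonpos hε.1.le hε.2.le) (s + t), b)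
          * (c * Real.exp (θ * t)) := by
    intro g s b c θ
    apply Continuous.mul
    · exact g.continuous.comp
        ((continuous_projIcc.comp (continuous_const.add continuous_id)).prodMk continuous_const)
    · exact continuous_const.mul (Real.continuous_exp.comp (continuous_const.mul continuous_id))
  have hw2 : ∀ α : Bool, 0 < (if α then γ + β else β) := by
    intro α; cases α <;> simp <;> linarith [hγ.1]
  -- nonnegativity of A g
  have hA_nonneg : ∀ g : C(Set.Icc (Real.log ε) (0:ℝ) × Bool, ℝ),
      (∀ φ, 0 ≤ g φ) → ∀ φ, 0 ≤ A g φ := by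
    intro g hg φ
    obtain ⟨s, α⟩ := φ
    rw [hA]
    have h1 : 0 ≤ ∫ t in (Real.log ε - s.1)..(0:ℝ),
        g (Set.projIcc (Real.log ε) 0 (Real.log_nonpos hε.1.le hε.2.le) (s.1 + t), true)
          * (β * Real.exp ((1 - γ) * t)) :=
      intervalIntegral.integral_nonneg (by linarith [s.2.1])
        (fun u _ => mul_nonneg (hg _) (by positivity))
    have h2 : 0 ≤ ∫ t in (0:ℝ)..(-s.1),
        g (Set.projIcc (Real.log ε) 0 (Real.log_nonpos hε.1.le hε.2.le) (s.1 + t), false)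
          * ((if α then γ + β else β) * Real.exp (γ * t)) :=
      intervalIntegral.integral_nonneg (by linarith [s.2.2])
        (fun u _ => mul_nonneg (hg _) (mul_nonneg (hw2 α).le (Real.exp_nonneg _)))
    linarith
  -- lemma 1 : positivity from a `true` point
  have lem1 : ∀ g : C(Set.Icc (Real.log ε) (0:ℝ) × Bool, ℝ), (∀ φ, 0 ≤ g φ) →
      ∀ u : Set.Icc (Real.log ε) (0:ℝ), 0 < g (u, true) →
      ∀ (s : Set.Icc (Real.log ε) (0:ℝ)) (α : Bool),
        u.1 ≤ s.1 → Real.log ε < s.1 → 0 < A g (s, α) := by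
    intro g hg u hu s α hus hLs
    rw [hA]
    have h2 : 0 ≤ ∫ t in (0:ℝ)..(-s.1),
        g (Set.projIcc (Real.log ε) 0 (Real.log_nonpos hε.1.le hε.2.le) (s.1 + t), false)
          * ((if α then γ + β else β) * Real.exp (γ * t)) :=
      intervalIntegral.integral_nonneg (by linarith [s.2.2])
        (fun v _ => mul_nonneg (hg _) (mul_nonneg (hw2 α).le (Real.exp_nonneg _)))
    have h1 : 0 < ∫ t in (Real.log ε - s.1)..(0:ℝ),
        g (Set.projIcc (Real.log ε) 0 (Real.log_nonpos hε.1.le hε.2.le) (s.1 + t), true)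
          * (β * Real.exp ((1 - γ) * t)) := by
      apply integral_pos_aux (contF g s.1 true β (1 - γ)) (by linarith)
        (fun t => mul_nonneg (hg _) (by positivity)) (x := u.1 - s.1)
        ⟨by linarith [u.2.1], by linarith⟩
      have he : s.1 + (u.1 - s.1) = u.1 := by ring
      rw [he, Set.projIcc_of_mem _ u.2]
      exact mul_pos hu (by positivity)
    linarith
  -- lemma 2 : positivity from a `false` point
  have lem2 : ∀ g : C(Set.Icc (Real.log ε) (0:ℝ) × Bool, ℝ), (∀ φ, 0 ≤ g φ) →
      ∀ u : Set.Icc (Real.log ε) (0:ℝ), 0 < g (u, false) →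
      ∀ (s : Set.Icc (Real.log ε) (0:ℝ)) (α : Bool),
        s.1 ≤ u.1 → s.1 < 0 → 0 < A g (s, α) := by
    intro g hg u hu s α hsu hs0
    rw [hA]
    have h1 : 0 ≤ ∫ t in (Real.log ε - s.1)..(0:ℝ),
        g (Set.projIcc (Real.log ε) 0 (Real.log_nonpos hε.1.le hε.2.le) (s.1 + t), true)
          * (β * Real.exp ((1 - γ) * t)) :=
      intervalIntegral.integral_nonneg (by linarith [s.2.1])
        (fun v _ => mul_nonneg (hg _) (by positivity))
    have h2 : 0 < ∫ t in (0:ℝ)..(-s.1),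
        g (Set.projIcc (Real.log ε) 0 (Real.log_nonpos hε.1.le hε.2.le) (s.1 + t), false)
          * ((if α then γ + β else β) * Real.exp (γ * t)) := by
      apply integral_pos_aux (contF g s.1 false _ γ) (by linarith)
        (fun t => mul_nonneg (hg _) (mul_nonneg (hw2 α).le (Real.exp_nonneg _))) (x := u.1 - s.1)
        ⟨by linarith, by linarith [u.2.2]⟩
      have he : s.1 + (u.1 - s.1) = u.1 := by ring
      rw [he, Set.projIcc_of_mem _ u.2]
      exact mul_pos hu (mul_pos (hw2 α) (Real.exp_pos _))
    linarith
  -- main proof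
  intro g hg hg0
  obtain ⟨φ₀, hφ₀⟩ : ∃ φ, 0 < g φ := by
    by_contra h
    push_neg at h
    apply hg0
    ext φ
    simpa using le_antisymm (h φ) (hg φ)
  obtain ⟨u₀, b₀⟩ := φ₀
  have hAg_nonneg : ∀ φ, 0 ≤ A g φ := hA_nonneg g hg
  intro φ
  obtain ⟨s, α⟩ := φ
  have hu₀L : Real.log ε ≤ u₀.1 := u₀.2.1
  have hu₀0 : u₀.1 ≤ 0 := u₀.2.2
  have hsL : Real.log ε ≤ s.1 := s.2.1
  have hs0 : s.1 ≤ 0 := s.2.2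
  cases b₀ with
  | true =>
    have hAg : ∀ (v : Set.Icc (Real.log ε) (0:ℝ)) (b : Bool),
        u₀.1 ≤ v.1 → Real.log ε < v.1 → 0 < A g (v, b) :=
      fun v b h1 h2 => lem1 g hg u₀ hφ₀ v b h1 h2
    rcases hs0.lt_or_eq with hs | hs
    · -- s < 0 : use lem2 at v = (max u₀ s)/2
      have hm0 : max u₀.1 s.1 ≤ 0 := max_le hu₀0 hs0
      have hm1 : u₀.1 ≤ max u₀.1 s.1 := le_max_left _ _
      have hm2 : s.1 ≤ max u₀.1 s.1 := le_max_right _ _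
      have hmL : Real.log ε ≤ max u₀.1 s.1 := le_trans hu₀L hm1
      set v : Set.Icc (Real.log ε) (0:ℝ) :=
        ⟨max u₀.1 s.1 / 2, ⟨by linarith, by linarith⟩⟩ with hv
      have hvpos : 0 < A g (v, false) := hAg v false
        (by show u₀.1 ≤ max u₀.1 s.1 / 2; linarith)
        (by show Real.log ε < max u₀.1 s.1 / 2; linarith)
      exact lem2 (A g) hAg_nonneg v hvpos s α (by show s.1 ≤ max u₀.1 s.1 / 2; linarith) hs
    · -- s = 0 : use lem1 at v = 0
      set v : Set.Icc (Real.log ε) (0:ℝ) := ⟨0, ⟨hle, le_refl 0⟩⟩ with hv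
      have hvpos : 0 < A g (v, true) := hAg v true hu₀0 hL0
      exact lem1 (A g) hAg_nonneg v hvpos s α (by show (0:ℝ) ≤ s.1; linarith) (by linarith)
  | false =>
    have hAg : ∀ (v : Set.Icc (Real.log ε) (0:ℝ)) (b : Bool),
        v.1 ≤ u₀.1 → v.1 < 0 → 0 < A g (v, b) :=
      fun v b h1 h2 => lem2 g hg u₀ hφ₀ v b h1 h2
    rcases hsL.lt_or_eq with hLs | hLs
    · -- log ε < s : use lem1 at v = (min u₀ s + log ε)/2
      have hm0 : min u₀.1 s.1 ≤ 0 := le_trans (min_le_left _ _) hu₀0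
      have hm1 : min u₀.1 s.1 ≤ u₀.1 := min_le_left _ _
      have hm2 : min u₀.1 s.1 ≤ s.1 := min_le_right _ _
      have hmL : Real.log ε ≤ min u₀.1 s.1 := le_min hu₀L hsL
      set v : Set.Icc (Real.log ε) (0:ℝ) :=
        ⟨(min u₀.1 s.1 + Real.log ε)/2, ⟨by linarith, by linarith⟩⟩ with hv
      have hvpos : 0 < A g (v, true) := hAg v true (by show _ / 2 ≤ u₀.1; linarith)
        (by show _ / 2 < (0:ℝ); linarith)
      exact lem1 (A g) hAg_nonneg v hvpos s α (by show _ / 2 ≤ s.1; linarith) hLs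
    · -- s = log ε : use lem2 at v = (u₀ + log ε)/2
      set v : Set.Icc (Real.log ε) (0:ℝ) :=
        ⟨(u₀.1 + Real.log ε)/2, ⟨by linarith, by linarith⟩⟩ with hv
      have hvpos : 0 < A g (v, false) := hAg v false (by show _ / 2 ≤ u₀.1; linarith)
        (by show _ / 2 < (0:ℝ); linarith)
      exact lem2 (A g) hAg_nonneg v hvpos s α (by show s.1 ≤ _ / 2; linarith) (by linarith)
end

section
/- Fix ε ∈ (0,1), γ ∈ (1/2, 1) and β > 0. Set a_ℓ = β, a_r = γ + β, c_r = 1 and c_ℓ = β/(γ+β), and define g_e : [log ε, 0] × {ℓ, r} → ℝ by g_e(s,α) = c_α ε^γ e^{−γ s} if log ε ≤ s ≤ (log ε)/2, and g_e(s,α) = √(β/(γ+β)) ε^{1/2} e^{−(1−γ)s} if (log ε)/2 < s ≤ 0. Then for every (s,α) ∈ [log ε, 0] × {ℓ, r}, ∫_{log ε − s}^0 g_e(s+t, r) β e^{(1−γ)t} dt + ∫_0^{−s} g_e(s+t, ℓ) a_α e^{γ t} dt ≥ (√(β(γ+β))/(2γ−1)) · ε^{1/2−γ} (1 − ε^{γ−1/2})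 · g_e(s,α). -/
/-!
Write `L = log ε`, `δ = 2γ - 1` and `q = γ + β`. On each side of `L/2` the function
`t ↦ g_e(s + t, ·)` is an exponential in `t`, so every piece of `A g_e(s, α)` is elementary and
nonnegative. For `s ≤ L/2` the piece of the second integral where `s + t > L/2` equals
`√(βq)/δ · (ε^{-δ/2} - 1) g_e(s, α)` exactly; for `s > L/2` the piece of the first integral where
`s + t ≤ L/2` does. The constants match because `a_α = c_α q` and `√(βq) = q √(β/q)`.
-/

open Real Set MeasureTheory
open scoped Interval

namespace intervalIntegral

variable {E : Type*} [NormedAddCommGroup E] [NormedSpace ℝ E] {μ : Measure ℝ}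

theorem integral_eq_add_of_eqOn_uIoc {f g₁ g₂ : ℝ → E} {a m b : ℝ}
    (hg₁ : IntervalIntegrable g₁ μ a m) (hg₂ : IntervalIntegrable g₂ μ m b)
    (hf₁ : EqOn f g₁ (Ι a m)) (hf₂ : EqOn f g₂ (Ι m b)) :
    ∫ x in a..b, f x ∂μ = (∫ x in a..m, g₁ x ∂μ) + ∫ x in m..b, g₂ x ∂μ := by
  rw [← integral_add_adjacent_intervals ((intervalIntegrable_congr hf₁).2 hg₁)
      ((intervalIntegrable_congr hf₂).2 hg₂),
    integral_congr_ae (ae_of_all _ fun _ hx => hf₁ hx),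
    integral_congr_ae (ae_of_all _ fun _ hx => hf₂ hx)]

theorem integral_const_mul_exp_add_mul (C c k a b : ℝ) (hk : k ≠ 0) :
    ∫ t in a..b, C * exp (c + k * t) = C * ((exp (c + k * b) - exp (c + k * a)) / k) := by
  rw [integral_const_mul, integral_comp_add_mul (fun x => exp x) hk, integral_exp, smul_eq_mul,
    inv_mul_eq_div]

end intervalIntegral

open intervalIntegral

theorem Real.sqrt_mul_eq_sqrt_div_mul {x y : ℝ} (hx : 0 ≤ x) (hy : 0 < y) :
    √(x * y) = √(x / y) * y := by
  rw [show x * y = x / y * y ^ 2 by field_simp, sqrt_mul (div_nonneg hx hy.le), sqrt_sq hy.le]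

theorem Real.rpow_mul_one_sub_rpow_neg {x : ℝ} (hx : 0 < x) (y : ℝ) :
    x ^ y * (1 - x ^ (-y)) = x ^ y - 1 := by
  rw [mul_one_sub, ← rpow_add hx, add_neg_cancel, rpow_zero]

/-- The test function `g_e` with `ε = exp L`; `false` and `true` stand for the types `ℓ` and `r`. -/
noncomputable def testFn (L γ β s : ℝ) (α : Bool) : ℝ :=
  if s ≤ L / 2 then (if α then 1 else β / (γ + β)) * exp (γ * (L - s))
  else √(β / (γ + β)) * exp (L / 2 - (1 - γ) * s)

/-- The operator `A` of the idealized branching process on the type space `[L, 0] × {ℓ, r}`. -/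
noncomputable def branchingOp (L γ β : ℝ) (g : ℝ → Bool → ℝ) (s : ℝ) (α : Bool) : ℝ :=
  (∫ t in (L - s)..0, g (s + t) true * (β * exp ((1 - γ) * t))) +
    ∫ t in 0..(-s), g (s + t) false * ((if α then γ + β else β) * exp (γ * t))

section TestFunction

variable {L γ β : ℝ}

theorem testFn_nonneg (hβ : 0 ≤ β) (hγβ : 0 < γ + β) (s : ℝ) (α : Bool) :
    0 ≤ testFn L γ β s α := by
  have := div_nonneg hβ hγβ.le
  unfold testFn
  split_ifs <;> positivity

theorem testFn_add_mul_exp_of_le {s t : ℝ} (h : s + t ≤ L / 2) (α : Bool) (w k : ℝ) :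
    testFn L γ β (s + t) α * (w * exp (k * t)) =
      w * (if α then 1 else β / (γ + β)) * exp (γ * (L - s) + (k - γ) * t) := by
  rw [testFn, if_pos h, show γ * (L - s) + (k - γ) * t = γ * (L - (s + t)) + k * t by ring,
    exp_add]
  ring

theorem testFn_add_mul_exp_of_lt {s t : ℝ} (h : L / 2 < s + t) (α : Bool) (w k : ℝ) :
    testFn L γ β (s + t) α * (w * exp (k * t)) =
      w * √(β / (γ + β)) * exp (L / 2 - (1 - γ) * s + (k - (1 - γ)) * t) := by
  rw [testFn, if_neg h.not_ge,
    show L / 2 - (1 - γ) * s + (k - (1 - γ)) * t = L / 2 - (1 - γ) * (s + t) + k * t by ring,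
    exp_add]
  ring

theorem testFn_log {ε : ℝ} (hε : 0 < ε) (s : ℝ) (α : Bool) :
    testFn (log ε) γ β s α =
      if s ≤ log ε / 2 then (if α then 1 else β / (γ + β)) * ε ^ γ * exp (-γ * s)
      else √(β / (γ + β)) * √ε * exp (-(1 - γ) * s) := by
  rw [testFn, rpow_def_of_pos hε, ← exp_log hε, log_exp, ← exp_half]
  split_ifs <;> rw [mul_assoc, ← exp_add] <;> ring_nf

theorem rate_eq_coeff_mul (hγβ : γ + β ≠ 0) (α : Bool) :
    (if α then γ + β else β) = (if α then 1 else β / (γ + β)) * (γ + β) := by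
  cases α <;> simp [hγβ]

theorem mul_testFn_le_branchingOp_of_le (hγ : 1 / 2 < γ) (hβ : 0 < β) {s : ℝ} (hLs : L ≤ s)
    (hs : s ≤ L / 2) (α : Bool) :
    √(β * (γ + β)) / (2 * γ - 1) * (exp ((1 / 2 - γ) * L) - 1) * testFn L γ β s α ≤
      branchingOp L γ β (testFn L γ β) s α := by
  have hγβ : 0 < γ + β := by linarith
  set a := if α then γ + β else β
  have ha : a = (if α then 1 else β / (γ + β)) * (γ + β) := rate_eq_coeff_mul hγβ.ne' α
  have hfirst : 0 ≤ ∫ t in (L - s)..0, testFn L γ β (s + t) true * (β * exp ((1 - γ) * t)) :=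
    integral_nonneg (by linarith) fun t _ =>
      mul_nonneg (testFn_nonneg hβ.le hγβ _ _) (by positivity)
  have hsecond : ∫ t in 0..(-s), testFn L γ β (s + t) false * (a * exp (γ * t)) =
      (∫ t in 0..(L / 2 - s), a * (β / (γ + β)) * exp (γ * (L - s) + (γ - γ) * t)) +
        a * √(β / (γ + β)) * ((exp (L / 2 - (1 - γ) * s + (γ - (1 - γ)) * -s) -
          exp (L / 2 - (1 - γ) * s + (γ - (1 - γ)) * (L / 2 - s))) / (γ - (1 - γ))) := by
    rw [← integral_const_mul_exp_add_mul _ _ _ _ _ (by linarith)]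
    refine integral_eq_add_of_eqOn_uIoc ((by fun_prop : Continuous _).intervalIntegrable _ _)
      ((by fun_prop : Continuous _).intervalIntegrable _ _) (fun t ht => ?_) fun t ht => ?_
    · rw [uIoc_of_le (by linarith)] at ht
      exact testFn_add_mul_exp_of_le (by linarith [ht.2]) false a γ
    · rw [uIoc_of_le (by linarith)] at ht
      exact testFn_add_mul_exp_of_lt (by linarith [ht.1]) false a γ
  have hconst : 0 ≤ ∫ t in 0..(L / 2 - s), a * (β / (γ + β)) * exp (γ * (L - s) + (γ - γ) * t) :=
    integral_nonneg (by linarith) fun t _ => by positivity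
  have hexact : a * √(β / (γ + β)) * ((exp (L / 2 - (1 - γ) * s + (γ - (1 - γ)) * -s) -
        exp (L / 2 - (1 - γ) * s + (γ - (1 - γ)) * (L / 2 - s))) / (γ - (1 - γ))) =
      √(β * (γ + β)) / (2 * γ - 1) * (exp ((1 / 2 - γ) * L) - 1) * testFn L γ β s α := by
    rw [testFn, if_pos hs, sqrt_mul_eq_sqrt_div_mul hβ.le hγβ, ha,
      show L / 2 - (1 - γ) * s + (γ - (1 - γ)) * -s = (1 / 2 - γ) * L + γ * (L - s) by ring,
      show L / 2 - (1 - γ) * s + (γ - (1 - γ)) * (L / 2 - s) = γ * (L - s) by ring, exp_add,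
      show γ - (1 - γ) = 2 * γ - 1 by ring]
    ring
  rw [branchingOp, hsecond]
  linarith only [hfirst, hconst, hexact]

theorem mul_testFn_le_branchingOp_of_lt (hγ : 1 / 2 < γ) (hβ : 0 < β) {s : ℝ} (hs : L / 2 < s)
    (hs0 : s ≤ 0) (α : Bool) :
    √(β * (γ + β)) / (2 * γ - 1) * (exp ((1 / 2 - γ) * L) - 1) * testFn L γ β s α ≤
      branchingOp L γ β (testFn L γ β) s α := by
  have hγβ : 0 < γ + β := by linarith
  have hfirst : ∫ t in (L - s)..0, testFn L γ β (s + t) true * (β * exp ((1 - γ) * t)) =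
      β * ((exp (γ * (L - s) + (1 - γ - γ) * (L / 2 - s)) -
          exp (γ * (L - s) + (1 - γ - γ) * (L - s))) / (1 - γ - γ)) +
        ∫ t in (L / 2 - s)..0,
          β * √(β / (γ + β)) * exp (L / 2 - (1 - γ) * s + (1 - γ - (1 - γ)) * t) := by
    rw [← integral_const_mul_exp_add_mul _ _ _ _ _ (by linarith)]
    refine integral_eq_add_of_eqOn_uIoc ((by fun_prop : Continuous _).intervalIntegrable _ _)
      ((by fun_prop : Continuous _).intervalIntegrable _ _) (fun t ht => ?_) fun t ht => ?_
    · rw [uIoc_of_le (by linarith)] at ht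
      simpa using testFn_add_mul_exp_of_le (by linarith [ht.2]) true β (1 - γ)
    · rw [uIoc_of_le (by linarith)] at ht
      exact testFn_add_mul_exp_of_lt (by linarith [ht.1]) true β (1 - γ)
  have hconst : 0 ≤ ∫ t in (L / 2 - s)..0,
      β * √(β / (γ + β)) * exp (L / 2 - (1 - γ) * s + (1 - γ - (1 - γ)) * t) :=
    integral_nonneg (by linarith) fun t _ => by positivity
  have hsecond : 0 ≤ ∫ t in 0..(-s),
      testFn L γ β (s + t) false * ((if α then γ + β else β) * exp (γ * t)) :=
    integral_nonneg (by linarith) fun t _ =>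
      mul_nonneg (testFn_nonneg hβ.le hγβ _ _) (by positivity)
  have hexact : β * ((exp (γ * (L - s) + (1 - γ - γ) * (L / 2 - s)) -
        exp (γ * (L - s) + (1 - γ - γ) * (L - s))) / (1 - γ - γ)) =
      √(β * (γ + β)) / (2 * γ - 1) * (exp ((1 / 2 - γ) * L) - 1) * testFn L γ β s α := by
    have hR : √(β / (γ + β)) ^ 2 = β / (γ + β) := sq_sqrt (by positivity)
    rw [testFn, if_neg hs.not_ge, sqrt_mul_eq_sqrt_div_mul hβ.le hγβ,
      show γ * (L - s) + (1 - γ - γ) * (L / 2 - s) = L / 2 - (1 - γ) * s by ring,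
      show γ * (L - s) + (1 - γ - γ) * (L - s) = (1 / 2 - γ) * L + (L / 2 - (1 - γ) * s) by ring,
      exp_add, show 1 - γ - γ = -(2 * γ - 1) by ring]
    field_simp
    rw [hR]
    field_simp
    ring
  rw [branchingOp, hfirst]
  linarith only [hsecond, hconst, hexact]

theorem mul_testFn_le_branchingOp (hγ : 1 / 2 < γ) (hβ : 0 < β) {s : ℝ} (hs : s ∈ Icc L 0)
    (α : Bool) :
    √(β * (γ + β)) / (2 * γ - 1) * (exp ((1 / 2 - γ) * L) - 1) * testFn L γ β s α ≤
      branchingOp L γ β (testFn L γ β) s α := by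
  rcases le_or_gt s (L / 2) with hsL | hsL
  · exact mul_testFn_le_branchingOp_of_le hγ hβ hs.1 hsL α
  · exact mul_testFn_le_branchingOp_of_lt hγ hβ hsL hs.2 α

end TestFunction

/-- For `ε ∈ (0,1)`, `γ ∈ (1/2,1)`, `β > 0`, the two-bump test function
`g_e` (with `c_r = 1`, `c_ℓ = β/(γ+β)`, `ℓ = false`, `r = true`) satisfies
`A g_e ≥ (√(β(γ+β))/(2γ−1)) ε^{1/2−γ} (1 − ε^{γ−1/2}) g_e` pointwise on
`[log ε, 0] × {ℓ, r}`, where `A` is the integral operator of the idealized branching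
process with `a_ℓ = β`, `a_r = γ + β`. -/
theorem IBP_operator_test_function_lower_bound (ε γ β : ℝ) (hε : ε ∈ Set.Ioo (0 : ℝ) 1)
    (hγ : γ ∈ Set.Ioo (1 / 2 : ℝ) 1) (hβ : 0 < β)
    (ge : ℝ → Bool → ℝ)
    (hge : ∀ (s : ℝ) (α : Bool), ge s α =
      if s ≤ Real.log ε / 2 then
        (if α then (1 : ℝ) else β / (γ + β)) * ε ^ γ * Real.exp (-γ * s)
      else Real.sqrt (β / (γ + β)) * Real.sqrt ε * Real.exp (-(1 - γ) * s)) :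
    ∀ s ∈ Set.Icc (Real.log ε) (0 : ℝ), ∀ α : Bool,
      Real.sqrt (β * (γ + β)) / (2 * γ - 1) * ε ^ ((1 : ℝ) / 2 - γ)
          * (1 - ε ^ (γ - 1 / 2)) * ge s α ≤
        (∫ t in (Real.log ε - s)..(0 : ℝ), ge (s + t) true * (β * Real.exp ((1 - γ) * t)))
        + ∫ t in (0 : ℝ)..(-s),
            ge (s + t) false * ((if α then γ + β else β) * Real.exp (γ * t)) := by
  intro s hs α
  have hge_eq : ge = testFn (log ε) γ β := funext₂ fun s α => by rw [hge, testFn_log hε.1]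
  rw [hge_eq, mul_assoc (√(β * (γ + β)) / (2 * γ - 1)), show γ - 1 / 2 = -(1 / 2 - γ) by ring,
    rpow_mul_one_sub_rpow_neg hε.1, rpow_def_of_pos hε.1, mul_comm (log ε)]
  exact mul_testFn_le_branchingOp hγ.1 hβ hs α
end

section
/- Let ε ∈ (0,1), γ ∈ (1/2, 1) and β > 0. Then for every s ∈ [log ε, 0], ∫_{log ε − s}^0 β e^{(1−γ)p} ( ∫_0^{−(s+p)} (γ+β) e^{γ q} e^{−(1−γ)(s+p+q)} dq ) dp ≤ (β(γ+β)/(2γ−1)²) · ε^{1−2γ} · e^{−(1−γ)s}. -/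
/-!
Both integrals are elementary. In the inner one the exponents combine to `e^{(2γ-1)q}`, and
after integrating, the outer integrand becomes a constant multiple of
`e^{-γs} e^{(1-2γ)p} - e^{-(1-γ)s}`. Integrating exactly, the double integral equals the claimed
bound minus `β(γ+β)/(2γ-1)² · e^{-γs}` and minus `β(γ+β)/(2γ-1) · (s - log ε) e^{-(1-γ)s}`,
both nonnegative for `2γ > 1` and `s ≥ log ε`.
-/

open MeasureTheory Real

theorem integral_exp_mul_of_ne_zero {c : ℝ} (hc : c ≠ 0) (a b : ℝ) :
    ∫ x in a..b, exp (c * x) = (exp (c * b) - exp (c * a)) / c := by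
  rw [intervalIntegral.integral_comp_mul_left (fun x => exp x) hc, integral_exp, smul_eq_mul,
    inv_mul_eq_div]

theorem integral_exp_mul_exp_neg_mul {γ : ℝ} (hγ : 2 * γ - 1 ≠ 0) (a y : ℝ) :
    ∫ q in (0 : ℝ)..(-y), a * exp (γ * q) * exp (-(1 - γ) * (y + q))
      = a * (exp (-γ * y) - exp (-(1 - γ) * y)) / (2 * γ - 1) := by
  have hintegrand : ∀ q, a * exp (γ * q) * exp (-(1 - γ) * (y + q))
      = a * exp (-(1 - γ) * y) * exp ((2 * γ - 1) * q) := fun q => by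
    rw [mul_assoc, ← exp_add, mul_assoc, ← exp_add]; ring_nf
  have hexp : exp (-(1 - γ) * y) * exp ((2 * γ - 1) * -y) = exp (-γ * y) := by
    rw [← exp_add]; ring_nf
  simp_rw [hintegrand]
  rw [intervalIntegral.integral_const_mul, integral_exp_mul_of_ne_zero hγ, mul_zero, exp_zero]
  linear_combination a / (2 * γ - 1) * hexp

theorem two_step_integral_eq {γ : ℝ} (hγ : 2 * γ - 1 ≠ 0) (a b l s : ℝ) :
    (∫ p in (l - s)..(0 : ℝ), b * exp ((1 - γ) * p) *
        ∫ q in (0 : ℝ)..(-(s + p)), a * exp (γ * q) * exp (-(1 - γ) * (s + p + q)))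
      = a * b / (2 * γ - 1) ^ 2 * (exp ((1 - 2 * γ) * l) * exp (-(1 - γ) * s) - exp (-γ * s))
        - a * b / (2 * γ - 1) * (s - l) * exp (-(1 - γ) * s) := by
  have hintegrand : ∀ p, b * exp ((1 - γ) * p) *
      (a * (exp (-γ * (s + p)) - exp (-(1 - γ) * (s + p))) / (2 * γ - 1))
      = a * b / (2 * γ - 1) * (exp (-γ * s) * exp ((1 - 2 * γ) * p) - exp (-(1 - γ) * s)) :=
    fun p => by
      have h₁ : exp ((1 - γ) * p) * exp (-γ * (s + p)) = exp (-γ * s) * exp ((1 - 2 * γ) * p) := by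
        rw [← exp_add, ← exp_add]; ring_nf
      have h₂ : exp ((1 - γ) * p) * exp (-(1 - γ) * (s + p)) = exp (-(1 - γ) * s) := by
        rw [← exp_add]; ring_nf
      linear_combination a * b / (2 * γ - 1) * (h₁ - h₂)
  have hexp : exp (-γ * s) * exp ((1 - 2 * γ) * (l - s))
      = exp ((1 - 2 * γ) * l) * exp (-(1 - γ) * s) := by
    rw [← exp_add, ← exp_add]; ring_nf
  have hγ' : 1 - 2 * γ ≠ 0 := fun h => hγ (by linarith)
  simp_rw [integral_exp_mul_exp_neg_mul hγ, hintegrand]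
  rw [intervalIntegral.integral_const_mul, intervalIntegral.integral_sub
    (Continuous.intervalIntegrable (by fun_prop) _ _) intervalIntegrable_const,
    intervalIntegral.integral_const_mul, integral_exp_mul_of_ne_zero hγ',
    intervalIntegral.integral_const, mul_zero, exp_zero, smul_eq_mul]
  -- `ring` treats `(1 - 2γ)⁻¹`, `(2γ - 1)⁻¹` and `((2γ - 1)²)⁻¹` as unrelated atoms.
  have hinv : (1 - 2 * γ)⁻¹ = -(2 * γ - 1)⁻¹ := by rw [← neg_sub, inv_neg]
  simp only [div_eq_mul_inv, hinv, ← inv_pow]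
  linear_combination a * b * (2 * γ - 1)⁻¹ ^ 2 * hexp

/-- For `ε ∈ (0,1)`, `γ ∈ (1/2,1)`, `β > 0` and `s ∈ [log ε, 0]`,
`∫_{log ε − s}^0 β e^{(1−γ)p} (∫_0^{−(s+p)} (γ+β) e^{γq} e^{−(1−γ)(s+p+q)} dq) dp
 ≤ (β(γ+β)/(2γ−1)²) ε^{1−2γ} e^{−(1−γ)s}`. -/
theorem two_step_operator_estimate (ε γ β : ℝ) (hε : ε ∈ Set.Ioo (0 : ℝ) 1)
    (hγ : γ ∈ Set.Ioo (1 / 2 : ℝ) 1) (hβ : 0 < β) :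
    ∀ s ∈ Set.Icc (Real.log ε) (0 : ℝ),
      (∫ p in (Real.log ε - s)..(0 : ℝ), β * Real.exp ((1 - γ) * p) *
          ∫ q in (0 : ℝ)..(-(s + p)),
            (γ + β) * Real.exp (γ * q) * Real.exp (-(1 - γ) * (s + p + q)))
        ≤ β * (γ + β) / (2 * γ - 1) ^ 2 * ε ^ (1 - 2 * γ) * Real.exp (-(1 - γ) * s) := by
  intro s hs
  have hc : 0 < 2 * γ - 1 := by linarith [hγ.1]
  have hab : 0 ≤ (γ + β) * β := mul_nonneg (by linarith [hγ.1]) hβ.le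
  have h₁ : 0 ≤ (γ + β) * β / (2 * γ - 1) ^ 2 * exp (-γ * s) := by positivity
  have h₂ : 0 ≤ (γ + β) * β / (2 * γ - 1) * (s - log ε) * exp (-(1 - γ) * s) :=
    mul_nonneg (mul_nonneg (div_nonneg hab hc.le) (sub_nonneg.2 hs.1)) (exp_pos _).le
  rw [two_step_integral_eq hc.ne', rpow_def_of_pos hε.1, mul_comm (log ε)]
  linear_combination h₁ + h₂
end

section
/- Let γ ∈ (1/2, 1) and ε ∈ (0,1). Let T be a continuous linear operator on the real Hilbert space L²((ε,1)) (with Lebesgue measure) satisfying, for every g ∈ L²((ε,1)) and almost every x ∈ (ε,1), Tg(x) = ∫_ε^1 (min(x,y))^{−γ} (max(x,y))^{−(1−γ)} g(y) dy. Then the operator norm of T satisfies ‖T‖² ≤ (2/(2γ−1)²) · ε^{1−2γ}. -/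
open MeasureTheory Set

/-!
Hilbert–Schmidt: by Cauchy–Schwarz in `y`, `‖T‖² ≤ ∫∫ κ(x,y)² dy dx`. On `x ≤ y` the squared
kernel is `x^{-2γ} y^{2γ-2}`, and symmetrically otherwise, so `κ²` is dominated by the sum of
both terms. That sum is a rank-two kernel with double integral
`2 ∫ t^{-2γ} ∫ t^{2γ-2} ≤ 2 · ε^{1-2γ}/(2γ-1) · 1/(2γ-1)`, the first integral bounded by its
value on `(ε, ∞)` and the second by its value on `(0, 1)`.
-/

namespace ContinuousLinearMap

variable {E F : Type*} [NormedAddCommGroup E] [NormedAddCommGroup F] [NormedSpace ℝ E]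
  [NormedSpace ℝ F]

theorem sq_opNorm_le_of_forall_sq_le {T : E →L[ℝ] F} {M : ℝ} (hM : 0 ≤ M)
    (h : ∀ x, ‖T x‖ ^ 2 ≤ M * ‖x‖ ^ 2) : ‖T‖ ^ 2 ≤ M := by
  have hT : ‖T‖ ≤ √M := T.opNorm_le_bound (Real.sqrt_nonneg M) fun x => by
    rw [← Real.sqrt_sq (norm_nonneg (T x)), ← Real.sqrt_sq (norm_nonneg x), ← Real.sqrt_mul hM]
    exact Real.sqrt_le_sqrt (h x)
  calc ‖T‖ ^ 2 ≤ √M ^ 2 := by gcongr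
    _ = M := Real.sq_sqrt hM

end ContinuousLinearMap

namespace MeasureTheory

variable {α : Type*} [MeasurableSpace α] {μ : Measure α}

theorem L2.norm_sq_eq_integral_sq (g : Lp ℝ 2 μ) : ‖g‖ ^ 2 = ∫ x, g x ^ 2 ∂μ := by
  rw [← real_inner_self_eq_norm_sq, L2.inner_def]
  simp only [RCLike.inner_apply, conj_trivial, sq]

theorem sq_integral_mul_le_of_memLp {f g : α → ℝ} (hf : MemLp f 2 μ) (hg : MemLp g 2 μ) :
    (∫ x, f x * g x ∂μ) ^ 2 ≤ (∫ x, f x ^ 2 ∂μ) * ∫ x, g x ^ 2 ∂μ := by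
  have hinner : ∀ {u v : α → ℝ} (hu : MemLp u 2 μ) (hv : MemLp v 2 μ),
      inner ℝ (hu.toLp u) (hv.toLp v) = ∫ x, u x * v x ∂μ := fun hu hv => by
    rw [L2.inner_def]
    refine integral_congr_ae ?_
    filter_upwards [hu.coeFn_toLp, hv.coeFn_toLp] with x hux hvx
    rw [RCLike.inner_apply, conj_trivial, hux, hvx, mul_comm]
  simpa only [hinner, sq] using real_inner_mul_inner_self_le (hf.toLp f) (hg.toLp g)

theorem sq_opNorm_le_integral_of_kernel {k : α → α → ℝ} {G : α → ℝ}
    (T : Lp ℝ 2 μ →L[ℝ] Lp ℝ 2 μ) (hT : ∀ g : Lp ℝ 2 μ, ∀ᵐ x ∂μ, T g x = ∫ y, k x y * g y ∂μ)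
    (hk : ∀ᵐ x ∂μ, MemLp (k x) 2 μ) (hkG : ∀ᵐ x ∂μ, ∫ y, k x y ^ 2 ∂μ ≤ G x)
    (hG : Integrable G μ) : ‖T‖ ^ 2 ≤ ∫ x, G x ∂μ := by
  have hG0 : 0 ≤ ∫ x, G x ∂μ :=
    integral_nonneg_of_ae (hkG.mono fun x hx => (integral_nonneg fun y => sq_nonneg _).trans hx)
  refine ContinuousLinearMap.sq_opNorm_le_of_forall_sq_le hG0 fun g => ?_
  have hpointwise : ∀ᵐ x ∂μ, T g x ^ 2 ≤ G x * ‖g‖ ^ 2 := by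
    filter_upwards [hT g, hk, hkG] with x hTx hkx hkGx
    rw [hTx, L2.norm_sq_eq_integral_sq]
    calc (∫ y, k x y * g y ∂μ) ^ 2 ≤ (∫ y, k x y ^ 2 ∂μ) * ∫ y, g y ^ 2 ∂μ :=
          sq_integral_mul_le_of_memLp hkx (Lp.memLp g)
      _ ≤ G x * ∫ y, g y ^ 2 ∂μ := by gcongr
  calc ‖T g‖ ^ 2 = ∫ x, T g x ^ 2 ∂μ := L2.norm_sq_eq_integral_sq _
    _ ≤ ∫ x, G x * ‖g‖ ^ 2 ∂μ :=
      integral_mono_ae (Lp.memLp (T g)).integrable_sq (hG.mul_const _) hpointwise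
    _ = (∫ x, G x ∂μ) * ‖g‖ ^ 2 := integral_mul_const _ _

theorem sq_opNorm_le_of_sq_kernel_le {k : α → α → ℝ} {p q : α → ℝ}
    (T : Lp ℝ 2 μ →L[ℝ] Lp ℝ 2 μ) (hT : ∀ g : Lp ℝ 2 μ, ∀ᵐ x ∂μ, T g x = ∫ y, k x y * g y ∂μ)
    (hkm : ∀ x, AEStronglyMeasurable (k x) μ) (hp : Integrable p μ) (hq : Integrable q μ)
    (hkpq : ∀ᵐ x ∂μ, ∀ᵐ y ∂μ, k x y ^ 2 ≤ p x * q y + q x * p y) :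
    ‖T‖ ^ 2 ≤ 2 * (∫ x, p x ∂μ) * ∫ x, q x ∂μ := by
  have hdom : ∀ x, Integrable (fun y => p x * q y + q x * p y) μ := fun x =>
    (hq.const_mul _).add (hp.const_mul _)
  have hk : ∀ᵐ x ∂μ, MemLp (k x) 2 μ := hkpq.mono fun x hx =>
    (memLp_two_iff_integrable_sq (hkm x)).2 <| (hdom x).mono' ((hkm x).pow 2) <| by
      filter_upwards [hx] with y hy
      rwa [Real.norm_of_nonneg (sq_nonneg _)]
  have hkG : ∀ᵐ x ∂μ, ∫ y, k x y ^ 2 ∂μ ≤ p x * ∫ y, q y ∂μ + q x * ∫ y, p y ∂μ := by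
    filter_upwards [hk, hkpq] with x hkx hx
    rw [← integral_const_mul, ← integral_const_mul, ← integral_add (hq.const_mul _)
      (hp.const_mul _)]
    exact integral_mono_ae hkx.integrable_sq (hdom x) hx
  calc ‖T‖ ^ 2 ≤ ∫ x, p x * ∫ y, q y ∂μ + q x * ∫ y, p y ∂μ ∂μ :=
        sq_opNorm_le_integral_of_kernel T hT hk hkG ((hp.mul_const _).add (hq.mul_const _))
    _ = 2 * (∫ x, p x ∂μ) * ∫ x, q x ∂μ := by
      rw [integral_add (hp.mul_const _) (hq.mul_const _), integral_mul_const, integral_mul_const]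
      ring

end MeasureTheory

section RpowIntegrals

variable {a c d : ℝ}

theorem integrableOn_Ioo_rpow_of_lt_neg_one (ha : a < -1) (hc : 0 < c) :
    IntegrableOn (fun t : ℝ => t ^ a) (Ioo c d) :=
  (integrableOn_Ioi_rpow_of_lt ha hc).mono_set Ioo_subset_Ioi_self

theorem integral_Ioo_rpow_le_of_lt_neg_one (ha : a < -1) (hc : 0 < c) :
    ∫ t in Ioo c d, t ^ a ≤ -c ^ (a + 1) / (a + 1) := by
  rw [← integral_Ioi_rpow_of_lt ha hc]
  refine setIntegral_mono_set (integrableOn_Ioi_rpow_of_lt ha hc) ?_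
    Ioo_subset_Ioi_self.eventuallyLE
  filter_upwards [ae_restrict_mem measurableSet_Ioi] with t ht
  exact Real.rpow_nonneg (hc.trans ht).le a

theorem integrableOn_Ioc_zero_rpow_of_neg_one_lt (ha : -1 < a) (hd : 0 ≤ d) :
    IntegrableOn (fun t : ℝ => t ^ a) (Ioc 0 d) :=
  (intervalIntegrable_iff_integrableOn_Ioc_of_le hd).1
    (intervalIntegral.intervalIntegrable_rpow' ha)

theorem integrableOn_Ioo_rpow_of_neg_one_lt (ha : -1 < a) (hc : 0 ≤ c) (hd : 0 ≤ d) :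
    IntegrableOn (fun t : ℝ => t ^ a) (Ioo c d) :=
  (integrableOn_Ioc_zero_rpow_of_neg_one_lt ha hd).mono_set
    (Ioo_subset_Ioc_self.trans (Ioc_subset_Ioc_left hc))

theorem integral_Ioo_rpow_le_of_neg_one_lt (ha : -1 < a) (hc : 0 ≤ c) (hd : 0 ≤ d) :
    ∫ t in Ioo c d, t ^ a ≤ d ^ (a + 1) / (a + 1) := by
  have hzero : (0 : ℝ) ^ (a + 1) = 0 := Real.zero_rpow (by linarith)
  calc ∫ t in Ioo c d, t ^ a ≤ ∫ t in Ioc 0 d, t ^ a := by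
        refine setIntegral_mono_set (integrableOn_Ioc_zero_rpow_of_neg_one_lt ha hd) ?_
          (Ioo_subset_Ioc_self.trans (Ioc_subset_Ioc_left hc)).eventuallyLE
        filter_upwards [ae_restrict_mem measurableSet_Ioc] with t ht
        exact Real.rpow_nonneg ht.1.le a
    _ = d ^ (a + 1) / (a + 1) := by
      rw [← intervalIntegral.integral_of_le hd, integral_rpow (Or.inl ha), hzero, sub_zero]

end RpowIntegrals

theorem sq_rpow_min_mul_rpow_max_le {γ x y : ℝ} (hx : 0 < x) (hy : 0 < y) :
    (min x y ^ (-γ) * max x y ^ (-(1 - γ))) ^ 2 ≤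
      x ^ (-(2 * γ)) * y ^ (2 * γ - 2) + x ^ (2 * γ - 2) * y ^ (-(2 * γ)) := by
  have hsq : ∀ {u v : ℝ}, 0 < u → 0 < v →
      (u ^ (-γ) * v ^ (-(1 - γ))) ^ 2 = u ^ (-(2 * γ)) * v ^ (2 * γ - 2) := fun hu hv => by
    rw [mul_pow, ← Real.rpow_mul_natCast hu.le, ← Real.rpow_mul_natCast hv.le]
    ring_nf
  rcases le_total x y with hxy | hyx
  · rw [min_eq_left hxy, max_eq_right hxy, hsq hx hy]
    exact le_add_of_nonneg_right (by positivity)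
  · rw [min_eq_right hyx, max_eq_left hyx, hsq hy hx, mul_comm (y ^ _)]
    exact le_add_of_nonneg_left (by positivity)

/-- For `γ ∈ (1/2, 1)` and `ε ∈ (0,1)`, the preferential-attachment
integral operator `Tg(x) = ∫_ε^1 (x∧y)^{−γ} (x∨y)^{−(1−γ)} g(y) dy` on `L²((ε,1))`
satisfies `‖T‖² ≤ (2/(2γ−1)²) ε^{1−2γ}`. -/
theorem opNorm_PA_operator_upper (γ ε : ℝ) (hγ : γ ∈ Set.Ioo (1 / 2 : ℝ) 1)
    (hε : ε ∈ Set.Ioo (0 : ℝ) 1)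
    (T : Lp ℝ 2 (volume.restrict (Set.Ioo ε 1)) →L[ℝ] Lp ℝ 2 (volume.restrict (Set.Ioo ε 1)))
    (hT : ∀ g : Lp ℝ 2 (volume.restrict (Set.Ioo ε 1)),
      ∀ᵐ x ∂(volume.restrict (Set.Ioo ε 1)),
        (T g : ℝ → ℝ) x = ∫ y in Set.Ioo ε 1,
          (min x y) ^ (-γ) * (max x y) ^ (-(1 - γ)) * g y) :
    ‖T‖ ^ 2 ≤ 2 / (2 * γ - 1) ^ 2 * ε ^ (1 - 2 * γ) := by
  have hε0 : 0 < ε := hε.1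
  have h2γ : 0 < 2 * γ - 1 := by linarith [hγ.1]
  have hp : -(2 * γ) < -1 := by linarith
  have hq : -1 < 2 * γ - 2 := by linarith
  have hpos : ∀ᵐ x ∂(volume.restrict (Ioo ε 1)), 0 < x :=
    (ae_restrict_mem measurableSet_Ioo).mono fun x hx => hε0.trans hx.1
  have hHS := sq_opNorm_le_of_sq_kernel_le T hT (fun x => by fun_prop)
    (integrableOn_Ioo_rpow_of_lt_neg_one hp hε0)
    (integrableOn_Ioo_rpow_of_neg_one_lt hq hε0.le zero_le_one) <| by
      filter_upwards [hpos] with x hx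
      filter_upwards [hpos] with y hy
      exact sq_rpow_min_mul_rpow_max_le hx hy
  have hP : ∫ t in Ioo ε 1, t ^ (-(2 * γ)) ≤ ε ^ (1 - 2 * γ) / (2 * γ - 1) := by
    have h := integral_Ioo_rpow_le_of_lt_neg_one hp hε0 (d := 1)
    rwa [show -(2 * γ) + 1 = 1 - 2 * γ by ring, neg_div, ← div_neg, neg_sub] at h
  have hQ : ∫ t in Ioo ε 1, t ^ (2 * γ - 2) ≤ 1 / (2 * γ - 1) := by
    have h := integral_Ioo_rpow_le_of_neg_one_lt hq hε0.le zero_le_one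
    rwa [show 2 * γ - 2 + 1 = 2 * γ - 1 by ring, Real.one_rpow] at h
  have hQ0 : 0 ≤ ∫ t in Ioo ε 1, t ^ (2 * γ - 2) :=
    setIntegral_nonneg measurableSet_Ioo fun t ht => Real.rpow_nonneg (hε0.trans ht.1).le _
  calc ‖T‖ ^ 2 ≤ 2 * (∫ t in Ioo ε 1, t ^ (-(2 * γ))) * ∫ t in Ioo ε 1, t ^ (2 * γ - 2) := hHS
    _ ≤ 2 * (ε ^ (1 - 2 * γ) / (2 * γ - 1)) * (1 / (2 * γ - 1)) := by gcongr
    _ = 2 / (2 * γ - 1) ^ 2 * ε ^ (1 - 2 * γ) := by field_simp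
end
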